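/- arXiv:2502.14329 — 6 statements merged into one kernel-verified Lean document; each statement's English description precedes it below -/
import Mathlib

section
/- Let 𝐂 be a class of languages closed under inverse homomorphism. Let M be a finitely generated monoid, N a finitely generated submonoid of M, and X ⊆ M. If X is a 𝐂^∀-subset of M, then X ∩ N is a 𝐂^∀-subset of N. -/
/-!  Common framework: classes of languages over finite alphabets, `C^∀`- and
`C^∃`-subsets of finitely generated monoids and groups, closure properties
(cone, full semi-AFL), and `C^•`-flatness.  -/

/-- A class of languages: for each finite alphabet `Fin n`, a collection of languages over it. -/
abbrev LangClass : Type := ∀ n : ℕ, Set (Set (List (Fin n)))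

/-- `π` is a surjective monoid homomorphism from the free monoid on `Fin n`
(words, under concatenation) onto `M`; i.e. it presents `M` as a monoid generated
by the finite set `Fin n`. -/
structure FreeHomOnto {n : ℕ} (M : Type) [Monoid M] (π : List (Fin n) → M) : Prop where
  map_nil : π [] = 1
  map_append : ∀ u v : List (Fin n), π (u ++ v) = π u * π v
  surjective : Function.Surjective π

/-- `X ⊆ M` is a `C^∀`-subset of `M` w.r.t. the generating map `π`:
the full preimage `π⁻¹(X)` is a language of the class `C`. -/
def CForall (C : LangClass) {n : ℕ} {M : Type} [Monoid M]
    (π : List (Fin n) → M) (X : Set M) : Prop :=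
  {w : List (Fin n) | π w ∈ X} ∈ C n

/-- `X ⊆ M` is a `C^∃`-subset of `M` w.r.t. the generating map `π`:
some language of the class `C` is mapped onto `X` by `π`. -/
def CExists (C : LangClass) {n : ℕ} {M : Type} [Monoid M]
    (π : List (Fin n) → M) (X : Set M) : Prop :=
  ∃ L ∈ C n, π '' L = X

/-- Closure under inverse images of homomorphisms of free monoids on finite alphabets.
Such a homomorphism is determined by its values `f i` on letters, sending `w` to `w.flatMap f`. -/
def ClosedUnderInvHom (C : LangClass) : Prop :=
  ∀ (m n : ℕ) (f : Fin m → List (Fin n)), ∀ L ∈ C n,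
    {w : List (Fin m) | w.flatMap f ∈ L} ∈ C m

/-- Closure under images of homomorphisms of free monoids on finite alphabets. -/
def ClosedUnderHom (C : LangClass) : Prop :=
  ∀ (m n : ℕ) (f : Fin m → List (Fin n)), ∀ L ∈ C m,
    (fun w : List (Fin m) => w.flatMap f) '' L ∈ C n

/-- A language over `Fin n` is regular if it is accepted by a DFA with finitely many states. -/
def IsRegularLang {n : ℕ} (L : Set (List (Fin n))) : Prop :=
  ∃ (σ : Type) (_ : Fintype σ) (A : DFA (Fin n) σ), ∀ w : List (Fin n), w ∈ A.accepts ↔ w ∈ L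

/-- Closure under intersection with regular languages. -/
def ClosedUnderInterReg (C : LangClass) : Prop :=
  ∀ (n : ℕ), ∀ L ∈ C n, ∀ R : Set (List (Fin n)), IsRegularLang R → L ∩ R ∈ C n

/-- Closure under (binary) union. -/
def ClosedUnderUnion (C : LangClass) : Prop :=
  ∀ (n : ℕ), ∀ L₁ ∈ C n, ∀ L₂ ∈ C n, L₁ ∪ L₂ ∈ C n

/-- A cone: a class of languages closed under homomorphisms, inverse homomorphisms,
and intersection with regular languages. -/
def IsCone (C : LangClass) : Prop :=
  ClosedUnderHom C ∧ ClosedUnderInvHom C ∧ ClosedUnderInterReg C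

/-- A full semi-AFL: a cone closed under union. -/
def IsFullSemiAFL (C : LangClass) : Prop :=
  IsCone C ∧ ClosedUnderUnion C

/-- `G` is `C^∀`-flat as a group: for every finitely generated subgroup `H ≤ G`
(presented by a finite monoid generating map `ρ`), a subset of `H` is a `C^∀`-subset
of `G` iff it is a `C^∀`-subset of `H`; i.e. `C^∀(G | H) = C^∀(H)`. -/
def GroupCForallFlat (C : LangClass) (G : Type) [Group G] : Prop :=
  ∀ (H : Subgroup G) (n k : ℕ) (π : List (Fin n) → G) (ρ : List (Fin k) → ↥H),
    FreeHomOnto G π → FreeHomOnto (↥H) ρ →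
      ∀ X : Set G, X ⊆ (H : Set G) →
        (CForall C π X ↔ CForall C ρ (Subtype.val ⁻¹' X))

/-- `G` is `C^∃`-flat as a group: for every finitely generated subgroup `H ≤ G`,
a subset of `H` is a `C^∃`-subset of `G` iff it is a `C^∃`-subset of `H`;
i.e. `C^∃(G | H) = C^∃(H)`. -/
def GroupCExistsFlat (C : LangClass) (G : Type) [Group G] : Prop :=
  ∀ (H : Subgroup G) (n k : ℕ) (π : List (Fin n) → G) (ρ : List (Fin k) → ↥H),
    FreeHomOnto G π → FreeHomOnto (↥H) ρ →
      ∀ X : Set G, X ⊆ (H : Set G) →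
        (CExists C π X ↔ CExists C ρ (Subtype.val ⁻¹' X))

/-- `M` is `C^∀`-flat as a monoid: for every finitely generated submonoid `N ≤ M`,
a subset of `N` is a `C^∀`-subset of `M` iff it is a `C^∀`-subset of `N`;
i.e. `C^∀(M | N) = C^∀(N)`. -/
def MonoidCForallFlat (C : LangClass) (M : Type) [Monoid M] : Prop :=
  ∀ (N : Submonoid M) (n k : ℕ) (π : List (Fin n) → M) (ρ : List (Fin k) → ↥N),
    FreeHomOnto M π → FreeHomOnto (↥N) ρ →
      ∀ X : Set M, X ⊆ (N : Set M) →
        (CForall C π X ↔ CForall C ρ (Subtype.val ⁻¹' X))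

/-- `M` is `C^∃`-flat as a monoid: for every finitely generated submonoid `N ≤ M`,
a subset of `N` is a `C^∃`-subset of `M` iff it is a `C^∃`-subset of `N`;
i.e. `C^∃(M | N) = C^∃(N)`. -/
def MonoidCExistsFlat (C : LangClass) (M : Type) [Monoid M] : Prop :=
  ∀ (N : Submonoid M) (n k : ℕ) (π : List (Fin n) → M) (ρ : List (Fin k) → ↥N),
    FreeHomOnto M π → FreeHomOnto (↥N) ρ →
      ∀ X : Set M, X ⊆ (N : Set M) →
        (CExists C π X ↔ CExists C ρ (Subtype.val ⁻¹' X))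
/-- If `C` is closed under inverse homomorphism, `M` is a finitely
generated monoid, `N` a finitely generated submonoid of `M` (presented by `ρ`) and
`X ⊆ M` is a `C^∀`-subset of `M`, then `X ∩ N` is a `C^∀`-subset of `N`. -/
theorem stmt1 (C : LangClass) (hC : ClosedUnderInvHom C)
    {M : Type} [Monoid M] {n k : ℕ} (π : List (Fin n) → M) (hπ : FreeHomOnto M π)
    (N : Submonoid M) (ρ : List (Fin k) → ↥N) (hρ : FreeHomOnto (↥N) ρ)
    (X : Set M) (hX : CForall C π X) :
    CForall C ρ (Subtype.val ⁻¹' X) := by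
  choose f hf using fun i : Fin k => hπ.surjective ((ρ [i] : ↥N) : M)
  have key : ∀ w : List (Fin k), π (w.flatMap f) = ((ρ w : ↥N) : M) := by
    intro w
    induction w with
    | nil => simp [hρ.map_nil, hπ.map_nil]
    | cons a t ih =>
        have : a :: t = [a] ++ t := rfl
        rw [this, List.flatMap_append, hπ.map_append, hρ.map_append]
        simp only [List.flatMap] at ih ⊢
        simp [hf a, ih]
  have h2 := hC k n f _ hX
  have heq : {w : List (Fin k) | ρ w ∈ Subtype.val ⁻¹' X}
      = {w : List (Fin k) | w.flatMap f ∈ {w : List (Fin n) | π w ∈ X}} := by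
    ext w
    simp [key w]
  unfold CForall
  rw [heq]
  exact h2
end

section
/- Let 𝐂 be a full semi-AFL, let G be a finitely generated group, and let H ≤ G be a subgroup of finite index. Then 𝐂^∀(G | H) = 𝐂^∀(H): a subset of H is a 𝐂^∀-subset of G if and only if it is a 𝐂^∀-subset of H. -/
/-!
One inclusion is an inverse homomorphism: send each generator of `H` to a word over the
generators of `G` representing it. For the other, run the coset automaton of `H`, whose states
are the finitely many right cosets `Hg`: a word `w` leads from `H` back to `H` iff `π w ∈ H`.
Fix a transversal `r` with `r(H) = 1` and replace each letter `a`, read in state `q`, by a word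
over the generators of `H` spelling the Schreier generator `r(q) a r(qa)⁻¹`. These telescope to
`π w` on runs from `H` to `H`, so `π⁻¹(X)` is the preimage of `ρ⁻¹(X)` under a sequential
transduction, and cones are closed under those.
-/

namespace FreeHomOnto

variable {M : Type} [Monoid M] {n : ℕ} {π : List (Fin n) → M}

theorem map_cons (hπ : FreeHomOnto M π) (a : Fin n) (w : List (Fin n)) :
    π (a :: w) = π [a] * π w :=
  hπ.map_append [a] w

theorem map_flatMap (hπ : FreeHomOnto M π) {β : Type*} (f : β → List (Fin n)) (u : List β) :
    π (u.flatMap f) = (u.map fun x => π (f x)).prod := by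
  induction u with
  | nil => exact hπ.map_nil
  | cons x u ih => rw [List.flatMap_cons, hπ.map_append, ih, List.map_cons, List.prod_cons]

theorem eq_prod_map (hπ : FreeHomOnto M π) (w : List (Fin n)) :
    π w = (w.map fun a => π [a]).prod := by
  simpa only [List.flatMap_singleton'] using hπ.map_flatMap (fun a => [a]) w

end FreeHomOnto

theorem CForall.preimage_monoidHom {C : LangClass} (hInv : ClosedUnderInvHom C)
    {M N : Type} [Monoid M] [Monoid N] {n k : ℕ} {π : List (Fin n) → M}
    {ρ : List (Fin k) → N} (hπ : FreeHomOnto M π) (hρ : FreeHomOnto N ρ) (φ : N →* M)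
    {X : Set M} (hX : CForall C π X) : CForall C ρ (φ ⁻¹' X) := by
  choose f hf using fun b : Fin k => hπ.surjective (φ (ρ [b]))
  have hπf : ∀ w, π (w.flatMap f) = φ (ρ w) := fun w => by
    rw [hπ.map_flatMap, hρ.eq_prod_map w, map_list_prod, List.map_map]
    simp only [Function.comp_def, hf]
  simpa only [CForall, Set.mem_preimage, Set.mem_ofPred_eq, hπf] using hInv k n f _ hX

section LabelledRun

variable {Q α : Type*} (δ : Q → α → Q)

def labelledRun : Q → List α → List (Q × α)
  | _, [] => []
  | q, a :: w => (q, a) :: labelledRun (δ q a) w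

@[simp]
theorem map_snd_labelledRun (q : Q) (w : List α) : (labelledRun δ q w).map Prod.snd = w := by
  induction w generalizing q with
  | nil => rfl
  | cons a w ih => simp [labelledRun, ih]

variable [DecidableEq Q]

/-- Folding this over a word over `Q × α` checks that the word is a labelled run of `δ`. -/
def checkRunStep : Option Q → Q × α → Option Q
  | some q, (p, a) => if p = q then some (δ q a) else none
  | none, _ => none

theorem foldl_checkRunStep_none (u : List (Q × α)) : u.foldl (checkRunStep δ) none = none := by
  induction u with
  | nil => rfl
  | cons _ u ih => exact ih

theorem foldl_checkRunStep_labelledRun (q : Q) (w : List α) :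
    (labelledRun δ q w).foldl (checkRunStep δ) (some q) = some (w.foldl δ q) := by
  induction w generalizing q with
  | nil => rfl
  | cons a w ih => simp [labelledRun, checkRunStep, ih]

theorem eq_labelledRun_of_foldl_checkRunStep {u : List (Q × α)} {q q' : Q}
    (h : u.foldl (checkRunStep δ) (some q) = some q') :
    u = labelledRun δ q (u.map Prod.snd) := by
  induction u generalizing q with
  | nil => rfl
  | cons x u ih =>
    obtain ⟨p, a⟩ := x
    by_cases hp : p = q
    · subst hp
      simp only [List.foldl_cons, checkRunStep] at h
      simp [labelledRun, ← ih h]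
    · simp [checkRunStep, hp, foldl_checkRunStep_none] at h

end LabelledRun

theorem isRegularLang_setOf_foldl_mem {m : ℕ} {σ : Type} [Finite σ] (step : σ → Fin m → σ)
    (s : σ) (F : Set σ) : IsRegularLang {u : List (Fin m) | u.foldl step s ∈ F} :=
  ⟨σ, Fintype.ofFinite σ, ⟨step, s, F⟩, fun _ => Iff.rfl⟩

/-- Cones are closed under inverse sequential transductions: encode a labelled run as a word over
the finite alphabet `Q × Fin n`, keep the runs from `q₀` to `q₁` (a regular condition) whose
output lies in `L` (an inverse homomorphism), and forget the states (a homomorphism). -/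
theorem IsCone.setOf_foldl_eq_and_flatMap_labelledRun_mem {C : LangClass} (hC : IsCone C)
    {n k : ℕ} {Q : Type} [Finite Q] (δ : Q → Fin n → Q) (out : Q × Fin n → List (Fin k))
    (q₀ q₁ : Q) {L : Set (List (Fin k))} (hL : L ∈ C k) :
    {w | w.foldl δ q₀ = q₁ ∧ (labelledRun δ q₀ w).flatMap out ∈ L} ∈ C n := by
  classical
  obtain ⟨hHom, hInv, hReg⟩ := hC
  have : Fintype Q := Fintype.ofFinite Q
  let e : Fin _ ≃ Q × Fin n := (Fintype.equivFin _).symm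
  have hRuns := hReg _ _ (hInv _ _ (fun i => out (e i)) L hL) _
    (isRegularLang_setOf_foldl_mem (fun s i => checkRunStep δ s (e i)) (some q₀) {some q₁})
  convert hHom _ _ (fun i => [(e i).2]) _ hRuns using 1
  ext w
  simp only [Set.mem_ofPred_eq, Set.mem_image, Set.mem_inter_iff, Set.mem_singleton_iff]
  constructor
  · rintro ⟨hq, hw⟩
    refine ⟨(labelledRun δ q₀ w).map e.symm, ⟨?_, ?_⟩, ?_⟩
    · simpa [List.flatMap_map] using hw
    · simpa [List.foldl_map, hq] using foldl_checkRunStep_labelledRun δ q₀ w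
    · simp [List.flatMap_map, ← List.map_eq_flatMap]
  · rintro ⟨u, ⟨hu, hrun⟩, rfl⟩
    rw [← List.foldl_map (f := e) (g := checkRunStep δ)] at hrun
    have hu_run := eq_labelledRun_of_foldl_checkRunStep δ hrun
    have hend := foldl_checkRunStep_labelledRun δ q₀ ((u.map e).map Prod.snd)
    rw [← hu_run, hrun, Option.some_inj] at hend
    have hw : u.flatMap (fun i => [(e i).2]) = (u.map e).map Prod.snd := by
      simp [List.map_map, ← List.map_eq_flatMap]
    rw [hw, ← hu_run, ← hend]
    refine ⟨rfl, ?_⟩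
    simpa [List.flatMap_map] using hu

namespace Subgroup

variable {G : Type} [Group G] (H : Subgroup G)

def rightCosetMul (g : G) :
    Quotient (QuotientGroup.rightRel H) → Quotient (QuotientGroup.rightRel H) :=
  Quotient.map' (· * g) fun x y h => by
    rw [QuotientGroup.rightRel_apply] at h ⊢
    simpa only [mul_inv_rev, ← mul_assoc, mul_inv_cancel_right] using h

theorem rightCosetMul_mk (g x : G) :
    rightCosetMul H g (Quotient.mk'' x) = Quotient.mk'' (x * g) :=
  rfl

theorem mk''_eq_mk''_one_iff {g : G} :
    (Quotient.mk'' g : Quotient (QuotientGroup.rightRel H)) = Quotient.mk'' 1 ↔ g ∈ H := by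
  rw [Quotient.eq'', QuotientGroup.rightRel_apply, one_mul, inv_mem_iff]

open Classical in
noncomputable def cosetRep (q : Quotient (QuotientGroup.rightRel H)) : G :=
  if q = Quotient.mk'' 1 then 1 else q.out

theorem mk''_cosetRep (q : Quotient (QuotientGroup.rightRel H)) :
    Quotient.mk'' (cosetRep H q) = q := by
  unfold cosetRep
  split_ifs with hq
  · exact hq.symm
  · exact q.out_eq

theorem cosetRep_mk''_one : cosetRep H (Quotient.mk'' 1) = 1 :=
  if_pos rfl

theorem cosetRep_mul_mul_inv_mem (q : Quotient (QuotientGroup.rightRel H)) (g : G) :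
    cosetRep H q * g * (cosetRep H (rightCosetMul H g q))⁻¹ ∈ H := by
  have h := mk''_cosetRep H (rightCosetMul H g q)
  conv_rhs at h => rw [← mk''_cosetRep H q, rightCosetMul_mk]
  rwa [Quotient.eq'', QuotientGroup.rightRel_apply] at h

end Subgroup

section SchreierRewriting

variable {G : Type} [Group G] {H : Subgroup G} {n k : ℕ} {π : List (Fin n) → G}
  {ρ : List (Fin k) → H}

variable (H π) in
def cosetStep (q : Quotient (QuotientGroup.rightRel H)) (a : Fin n) :
    Quotient (QuotientGroup.rightRel H) :=
  H.rightCosetMul (π [a]) q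

theorem foldl_cosetStep (hπ : FreeHomOnto G π) (x : G) (w : List (Fin n)) :
    w.foldl (cosetStep H π) (Quotient.mk'' x) = Quotient.mk'' (x * π w) := by
  induction w generalizing x with
  | nil => rw [List.foldl_nil, hπ.map_nil, mul_one]
  | cons a w ih =>
    rw [List.foldl_cons, cosetStep, Subgroup.rightCosetMul_mk, ih, hπ.map_cons a w, mul_assoc]

theorem coe_flatMap_labelledRun (hπ : FreeHomOnto G π) (hρ : FreeHomOnto H ρ)
    (gw : Quotient (QuotientGroup.rightRel H) × Fin n → List (Fin k))
    (hgw : ∀ p, (ρ (gw p) : G) =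
      H.cosetRep p.1 * π [p.2] * (H.cosetRep (cosetStep H π p.1 p.2))⁻¹)
    (q : Quotient (QuotientGroup.rightRel H)) (w : List (Fin n)) :
    (ρ ((labelledRun (cosetStep H π) q w).flatMap gw) : G) =
      H.cosetRep q * π w * (H.cosetRep (w.foldl (cosetStep H π) q))⁻¹ := by
  induction w generalizing q with
  | nil => simp [labelledRun, hρ.map_nil, hπ.map_nil]
  | cons a w ih =>
    rw [labelledRun, List.flatMap_cons, hρ.map_append, Subgroup.coe_mul, hgw, ih,
      List.foldl_cons, hπ.map_cons a w]
    group

end SchreierRewriting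

theorem CForall.of_preimage_subtype_val {C : LangClass} (hC : IsCone C)
    {G : Type} [Group G] {n k : ℕ} {π : List (Fin n) → G} (hπ : FreeHomOnto G π)
    {H : Subgroup G} [H.FiniteIndex] {ρ : List (Fin k) → H} (hρ : FreeHomOnto H ρ)
    {X : Set G} (hX : X ⊆ H) (h : CForall C ρ (Subtype.val ⁻¹' X)) : CForall C π X := by
  have : Finite (Quotient (QuotientGroup.rightRel H)) :=
    .of_equiv _ (QuotientGroup.quotientRightRelEquivQuotientLeftRel H).symm
  choose gw hgw using fun p : Quotient (QuotientGroup.rightRel H) × Fin n =>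
    hρ.surjective ⟨_, H.cosetRep_mul_mul_inv_mem p.1 (π [p.2])⟩
  rw [CForall]
  convert hC.setOf_foldl_eq_and_flatMap_labelledRun_mem
    (cosetStep H π) gw (Quotient.mk'' 1) (Quotient.mk'' 1) h using 1
  ext w
  simp only [Set.mem_ofPred_eq, Set.mem_preimage,
    coe_flatMap_labelledRun hπ hρ gw (fun p => congrArg Subtype.val (hgw p)), foldl_cosetStep hπ,
    Subgroup.cosetRep_mk''_one, one_mul, Subgroup.mk''_eq_mk''_one_iff]
  have hrep : π w ∈ H → H.cosetRep (Quotient.mk'' (π w)) = 1 := fun hw => by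
    rw [(H.mk''_eq_mk''_one_iff).2 hw, Subgroup.cosetRep_mk''_one]
  exact ⟨fun hw => ⟨hX hw, by rwa [hrep (hX hw), inv_one, mul_one]⟩,
    fun ⟨hwH, hw⟩ => by rwa [hrep hwH, inv_one, mul_one] at hw⟩

/-- Let `C` be a full semi-AFL, `G` a finitely generated group and
`H ≤ G` a subgroup of finite index (presented by a finite generating map `ρ`).
Then `C^∀(G | H) = C^∀(H)`: a subset of `H` is a `C^∀`-subset of `G` iff it is a
`C^∀`-subset of `H`. -/
theorem stmt5 (C : LangClass) (hC : IsFullSemiAFL C)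
    {G : Type} [Group G] {n k : ℕ} (π : List (Fin n) → G) (hπ : FreeHomOnto G π)
    (H : Subgroup G) (hfi : H.FiniteIndex)
    (ρ : List (Fin k) → ↥H) (hρ : FreeHomOnto (↥H) ρ)
    (X : Set G) (hX : X ⊆ (H : Set G)) :
    CForall C π X ↔ CForall C ρ (Subtype.val ⁻¹' X) :=
  ⟨fun h => h.preimage_monoidHom hC.1.2.1 hπ hρ H.subtype,
    CForall.of_preimage_subtype_val hC.1 hπ hρ hX⟩
end

section
/- Let 𝐂 be a full semi-AFL, let G be a finitely generated group, and let H ≤ G be a subgroup of finite index. Then 𝐂^∃(G | H) = 𝐂^∃(H): a subset of H is a 𝐂^∃-subset of G if and only if it is a 𝐂^∃-subset of H. -/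
open scoped Classical

namespace Stmt6Aux

variable {G : Type} [Group G] (H : Subgroup G)

/-- Coset representative, normalized so that the trivial coset gets `1`. -/
noncomputable def rep (q : G ⧸ H) : G :=
  if q = ((1 : G) : G ⧸ H) then 1 else Quotient.out q

lemma mk_rep (q : G ⧸ H) : ((rep H q : G) : G ⧸ H) = q := by
  unfold rep
  split
  · next h => rw [h]
  · exact QuotientGroup.out_eq' q

lemma rep_one : rep H ((1 : G) : G ⧸ H) = 1 := if_pos rfl

/-- Transition of the coset automaton. -/
noncomputable def cstep (y : G) (q : G ⧸ H) : G ⧸ H := ((y⁻¹ * rep H q : G) : G ⧸ H)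

lemma cstep_mk (y x : G) : cstep H y ((x : G) : G ⧸ H) = ((y⁻¹ * x : G) : G ⧸ H) := by
  unfold cstep
  rw [QuotientGroup.eq]
  have h : (rep H ((x : G) : G ⧸ H))⁻¹ * x ∈ H := by
    rw [← QuotientGroup.eq]; exact mk_rep H _
  simpa [mul_inv_rev, mul_assoc] using h

/-- The Schreier generator. -/
noncomputable def sch (y : G) (q : G ⧸ H) : G :=
  (rep H q)⁻¹ * y * rep H (cstep H y q)

lemma sch_mem (y : G) (q : G ⧸ H) : sch H y q ∈ H := by
  have h : (y⁻¹ * rep H q)⁻¹ * rep H (cstep H y q) ∈ H := by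
    rw [← QuotientGroup.eq]
    exact (mk_rep H (cstep H y q)).symm
  simpa [sch, mul_inv_rev, mul_assoc] using h

variable {n m : ℕ}

/-- The coset automaton over the annotated alphabet. -/
noncomputable def dfa (π : List (Fin n) → G) (lt : Fin m → Fin n) (st : Fin m → G ⧸ H) :
    DFA (Fin m) (Option (G ⧸ H)) where
  step s d := match s with
    | none => none
    | some q => if st d = q then some (cstep H (π [lt d]) q) else none
  start := some ((1 : G) : G ⧸ H)
  accept := {some ((1 : G) : G ⧸ H)}

lemma dfa_step_some (π : List (Fin n) → G) (lt : Fin m → Fin n) (st : Fin m → G ⧸ H)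
    (q : G ⧸ H) (d : Fin m) :
    (dfa H π lt st).step (some q) d =
      if st d = q then some (cstep H (π [lt d]) q) else none := rfl

lemma dfa_step_none (π : List (Fin n) → G) (lt : Fin m → Fin n) (st : Fin m → G ⧸ H)
    (d : Fin m) : (dfa H π lt st).step none d = none := rfl

lemma dfa_evalFrom_cons (π : List (Fin n) → G) (lt : Fin m → Fin n) (st : Fin m → G ⧸ H)
    (s : Option (G ⧸ H)) (d : Fin m) (v : List (Fin m)) :
    (dfa H π lt st).evalFrom s (d :: v) =
      (dfa H π lt st).evalFrom ((dfa H π lt st).step s d) v := rfl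

lemma dfa_evalFrom_none (π : List (Fin n) → G) (lt : Fin m → Fin n) (st : Fin m → G ⧸ H)
    (v : List (Fin m)) : (dfa H π lt st).evalFrom none v = none := by
  induction v with
  | nil => rfl
  | cons d v ih => rw [dfa_evalFrom_cons, dfa_step_none]; exact ih

lemma run_spec {k : ℕ} (π : List (Fin n) → G) (hπ : FreeHomOnto G π)
    (ρ : List (Fin k) → ↥H) (hρ : FreeHomOnto (↥H) ρ)
    (lt : Fin m → Fin n) (st : Fin m → G ⧸ H) (f : Fin m → List (Fin k))
    (hf : ∀ d, ((ρ (f d) : ↥H) : G) = sch H (π [lt d]) (st d)) :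
    ∀ (v : List (Fin m)) (x : G) (t : G ⧸ H),
      (dfa H π lt st).evalFrom (some ((x⁻¹ : G) : G ⧸ H)) v = some t →
      t = (((x * π (v.flatMap fun d => [lt d]))⁻¹ : G) : G ⧸ H) ∧
        ((ρ (v.flatMap f) : ↥H) : G) =
          (rep H ((x⁻¹ : G) : G ⧸ H))⁻¹ * π (v.flatMap fun d => [lt d]) *
            rep H (((x * π (v.flatMap fun d => [lt d]))⁻¹ : G) : G ⧸ H) := by
  intro v
  induction v with
  | nil =>
    intro x t h
    simp only [DFA.evalFrom_nil, Option.some.injEq] at h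
    subst h
    constructor
    · simp [List.flatMap_nil, hπ.map_nil]
    · simp [List.flatMap_nil, hπ.map_nil, hρ.map_nil]
  | cons d v ih =>
    intro x t h
    rw [dfa_evalFrom_cons, dfa_step_some] at h
    by_cases hst : st d = ((x⁻¹ : G) : G ⧸ H)
    · rw [if_pos hst, cstep_mk] at h
      have hre : ((π [lt d])⁻¹ * x⁻¹ : G) = ((x * π [lt d])⁻¹ : G) := (mul_inv_rev _ _).symm
      rw [hre] at h
      obtain ⟨ht, hv⟩ := ih (x * π [lt d]) t h
      have hπc : π ((d :: v).flatMap fun d => [lt d])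
          = π [lt d] * π (v.flatMap fun d => [lt d]) := by
        rw [List.flatMap_cons, hπ.map_append]
      constructor
      · rw [ht, hπc, mul_assoc]
      · have hρc : ((ρ ((d :: v).flatMap f) : ↥H) : G)
            = ((ρ (f d) : ↥H) : G) * ((ρ (v.flatMap f) : ↥H) : G) := by
          rw [List.flatMap_cons, hρ.map_append]; rfl
        rw [hρc, hv, hf d, hπc, ← mul_assoc x]
        rw [hst]
        unfold sch
        rw [cstep_mk, hre]
        group
    · rw [if_neg hst, dfa_evalFrom_none] at h
      exact absurd h (by simp)

lemma run_exists (π : List (Fin n) → G) (hπ : FreeHomOnto G π)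
    (lt : Fin m → Fin n) (st : Fin m → G ⧸ H)
    (hs : ∀ (a : Fin n) (q : G ⧸ H), ∃ d, lt d = a ∧ st d = q) :
    ∀ (w : List (Fin n)) (x : G),
      ∃ v : List (Fin m), (v.flatMap fun d => [lt d]) = w ∧
        (dfa H π lt st).evalFrom (some ((x⁻¹ : G) : G ⧸ H)) v
          = some (((x * π w)⁻¹ : G) : G ⧸ H) := by
  intro w
  induction w with
  | nil =>
    intro x
    exact ⟨[], rfl, by rw [DFA.evalFrom_nil, hπ.map_nil, mul_one]⟩
  | cons a w ihw =>
    intro x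
    obtain ⟨d, hd1, hd2⟩ := hs a ((x⁻¹ : G) : G ⧸ H)
    obtain ⟨v, hv1, hv2⟩ := ihw (x * π [a])
    have hcons : π (a :: w) = π [a] * π w := hπ.map_append [a] w
    refine ⟨d :: v, ?_, ?_⟩
    · rw [List.flatMap_cons, hv1, hd1, List.singleton_append]
    · rw [dfa_evalFrom_cons, dfa_step_some, if_pos hd2, cstep_mk, hd1]
      rw [show ((π [a])⁻¹ * x⁻¹ : G) = ((x * π [a])⁻¹ : G) from (mul_inv_rev _ _).symm]
      rw [hv2, hcons, ← mul_assoc]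

end Stmt6Aux

/-- Let `C` be a full semi-AFL, `G` a finitely generated group and
`H ≤ G` a subgroup of finite index (presented by a finite generating map `ρ`).
Then `C^∃(G | H) = C^∃(H)`: a subset of `H` is a `C^∃`-subset of `G` iff it is a
`C^∃`-subset of `H`. -/
theorem stmt6 (C : LangClass) (hC : IsFullSemiAFL C)
    {G : Type} [Group G] {n k : ℕ} (π : List (Fin n) → G) (hπ : FreeHomOnto G π)
    (H : Subgroup G) (hfi : H.FiniteIndex)
    (ρ : List (Fin k) → ↥H) (hρ : FreeHomOnto (↥H) ρ)
    (X : Set G) (hX : X ⊆ (H : Set G)) :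
    CExists C π X ↔ CExists C ρ (Subtype.val ⁻¹' X) := by
  classical
  obtain ⟨⟨hHom, hInv, hReg⟩, -⟩ := hC
  constructor
  · rintro ⟨L, hL, hLX⟩
    haveI := hfi
    haveI : Finite (G ⧸ H) := H.finite_quotient_of_finiteIndex
    haveI := Fintype.ofFinite (G ⧸ H)
    set m := Fintype.card (Fin n × (G ⧸ H)) with hm
    let e : Fin m ≃ (Fin n × (G ⧸ H)) := (Fintype.equivFin _).symm
    let lt : Fin m → Fin n := fun d => (e d).1
    let st : Fin m → G ⧸ H := fun d => (e d).2
    choose lift hlift using hρ.surjective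
    let f : Fin m → List (Fin k) := fun d =>
      lift ⟨Stmt6Aux.sch H (π [lt d]) (st d), Stmt6Aux.sch_mem H _ _⟩
    have hf : ∀ d, ((ρ (f d) : ↥H) : G) = Stmt6Aux.sch H (π [lt d]) (st d) := by
      intro d
      show ((ρ (lift ⟨Stmt6Aux.sch H (π [lt d]) (st d), Stmt6Aux.sch_mem H _ _⟩) : ↥H) : G) = _
      rw [hlift]
    let A := Stmt6Aux.dfa H π lt st
    let R : Set (List (Fin m)) := fun w => w ∈ A.accepts
    have hR : IsRegularLang R := ⟨Option (G ⧸ H), inferInstance, A, fun w => Iff.rfl⟩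
    have hL2 : ({v : List (Fin m) | v.flatMap (fun d => [lt d]) ∈ L} ∩ R) ∈ C m :=
      hReg m _ (hInv m n (fun d => [lt d]) L hL) R hR
    refine ⟨(fun v => v.flatMap f) '' ({v | v.flatMap (fun d => [lt d]) ∈ L} ∩ R),
      hHom m k f _ hL2, ?_⟩
    ext y
    simp only [Set.mem_image, Set.mem_preimage, Set.mem_inter_iff, Set.mem_setOf_eq]
    constructor
    · rintro ⟨-, ⟨v, ⟨hvL, hvR⟩, rfl⟩, rfl⟩
      have hacc0 : A.eval v ∈ A.accept := (DFA.mem_accepts A).mp hvR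
      have hacc : A.evalFrom (some (((1 : G)⁻¹ : G) : G ⧸ H)) v
          = some (((1 : G) : G) : G ⧸ H) := by
        rw [inv_one]; exact hacc0
      obtain ⟨ht, hval⟩ := Stmt6Aux.run_spec H π hπ ρ hρ lt st f hf v 1 _ hacc
      have hw : π (v.flatMap fun d => [lt d]) ∈ H := by
        have h1 := QuotientGroup.eq.mp ht
        simp only [inv_one, one_mul, mul_one] at h1
        exact inv_mem_iff.mp h1
      have hq : (((π (v.flatMap fun d => [lt d]))⁻¹ : G) : G ⧸ H)
          = ((1 : G) : G ⧸ H) := by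
        rw [QuotientGroup.eq]; simpa using hw
      simp only [inv_one, one_mul, hq, Stmt6Aux.rep_one, mul_one] at hval
      rw [← hLX]
      exact ⟨_, hvL, hval.symm⟩
    · intro hy
      obtain ⟨w, hwL, hwπ⟩ : ∃ w ∈ L, π w = (y : G) := by
        have : (y : G) ∈ π '' L := by rw [hLX]; exact hy
        obtain ⟨w, hw, hw2⟩ := this
        exact ⟨w, hw, hw2⟩
      have hsurj : ∀ (a : Fin n) (q : G ⧸ H), ∃ d : Fin m, lt d = a ∧ st d = q := by
        intro a q
        refine ⟨e.symm (a, q), ?_, ?_⟩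
        · show (e (e.symm (a, q))).1 = a
          rw [Equiv.apply_symm_apply]
        · show (e (e.symm (a, q))).2 = q
          rw [Equiv.apply_symm_apply]
      obtain ⟨v, hv1, hv2⟩ := Stmt6Aux.run_exists H π hπ lt st hsurj w 1
      have hπwH : (((π w)⁻¹ : G) : G ⧸ H) = ((1 : G) : G ⧸ H) := by
        rw [QuotientGroup.eq]
        simp [hwπ]
      have hv2' : v ∈ R := by
        show A.eval v ∈ A.accept
        show A.evalFrom A.start v ∈ A.accept
        have hstart : A.start = some (((1 : G)⁻¹ : G) : G ⧸ H) := by rw [inv_one]; rfl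
        rw [hstart, hv2, one_mul, hπwH]
        exact rfl
      obtain ⟨-, hval⟩ := Stmt6Aux.run_spec H π hπ ρ hρ lt st f hf v 1 _ hv2
      refine ⟨v.flatMap f, ⟨v, ⟨?_, hv2'⟩, rfl⟩, ?_⟩
      · rw [hv1]; exact hwL
      · apply Subtype.ext
        rw [hv1] at hval
        simp only [inv_one, one_mul, mul_one, hπwH, Stmt6Aux.rep_one] at hval
        exact hval.trans hwπ
  · rintro ⟨L, hL, hLX⟩
    choose pre hpre using hπ.surjective
    let f : Fin k → List (Fin n) := fun i => pre ((ρ [i] : ↥H) : G)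
    have hfl : ∀ w : List (Fin k), π (w.flatMap f) = ((ρ w : ↥H) : G) := by
      intro w
      induction w with
      | nil => rw [List.flatMap_nil, hπ.map_nil, hρ.map_nil]; rfl
      | cons i w ih =>
        rw [List.flatMap_cons, hπ.map_append, ih]
        have h2 : ρ (i :: w) = ρ [i] * ρ w := hρ.map_append [i] w
        rw [h2]
        show π (f i) * _ = _
        rw [show π (f i) = ((ρ [i] : ↥H) : G) from hpre _]
        rfl
    refine ⟨(fun w => w.flatMap f) '' L, hHom k n f L hL, ?_⟩
    have himg : π '' ((fun w => w.flatMap f) '' L) = Subtype.val '' (ρ '' L) := by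
      rw [← Set.image_comp, ← Set.image_comp]
      exact Set.image_congr' hfl
    rw [himg, hLX, Set.image_preimage_eq_inter_range, Subtype.range_coe]
    exact Set.inter_eq_self_of_subset_left hX
end

section
/- Let 𝐂 be a full semi-AFL, G a finitely generated group, and H ≤ G a subgroup of finite index. Then, for each • ∈ {∀, ∃}: the family 𝐂^•(G) is closed under (binary) intersection if and only if the family 𝐂^•(H) is closed under (binary) intersection. -/
namespace S9

/-! ### Generic auxiliary lemmas -/

structure PreHom {A M : Type} [Monoid M] (φ : List A → M) : Prop where
  nil : φ [] = 1
  app : ∀ u v, φ (u ++ v) = φ u * φ v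

lemma PreHom.eq_of_letters {A M : Type} [Monoid M] {φ ψ : List A → M}
    (hφ : PreHom φ) (hψ : PreHom ψ) (h : ∀ a, φ [a] = ψ [a]) : ∀ w, φ w = ψ w := by
  intro w
  induction w with
  | nil => rw [hφ.nil, hψ.nil]
  | cons a w ih =>
      have e : a :: w = [a] ++ w := rfl
      rw [e, hφ.app, hψ.app, h, ih]

lemma union_fin {C : LangClass} (hU : ClosedUnderUnion C) {n : ℕ} {ι : Type}
    [Fintype ι] [Nonempty ι] (A : ι → Set (List (Fin n))) (h : ∀ i, A i ∈ C n) :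
    (⋃ i, A i) ∈ C n := by
  classical
  have key : ∀ s : Finset ι, s.Nonempty → (⋃ i ∈ s, A i) ∈ C n := by
    intro s hs
    induction hs using Finset.Nonempty.cons_induction with
    | singleton a => simpa using h a
    | cons a s ha hs ih =>
        have e : (⋃ i ∈ Finset.cons a s ha, A i) = A a ∪ ⋃ i ∈ s, A i := by
          rw [Finset.cons_eq_insert, Finset.set_biUnion_insert]
        rw [e]
        exact hU n _ (h a) _ ih
  have := key Finset.univ Finset.univ_nonempty
  simpa using this

/-! ### The "append / quotient by a fixed word" gadget, available in any cone -/

/-- The 3-state DFA accepting words of the form `w·last` with `w` over the embedded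
alphabet. -/
def gadDFA (n : ℕ) : DFA (Fin (n+1)) (Fin 3) where
  step s a := if s = 0 then (if a = Fin.last n then 1 else 0) else 2
  start := 0
  accept := {1}

lemma gadDFA_evalFrom_two (n : ℕ) (w : List (Fin (n+1))) :
    (gadDFA n).evalFrom 2 w = 2 := by
  induction w with
  | nil => rfl
  | cons a w ih => simpa [DFA.evalFrom, gadDFA, List.foldl_cons] using ih

lemma gadDFA_spec (n : ℕ) (u : List (Fin (n+1))) :
    u ∈ (gadDFA n).accepts ↔ ∃ w : List (Fin n), u = w.map Fin.castSucc ++ [Fin.last n] := by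
  rw [DFA.mem_accepts]
  show (gadDFA n).evalFrom 0 u ∈ ({1} : Set (Fin 3)) ↔ _
  rw [Set.mem_singleton_iff]
  induction u with
  | nil =>
      simp only [DFA.evalFrom, List.foldl_nil]
      constructor
      · intro h; exact absurd h (by decide)
      · rintro ⟨w, hw⟩; exact absurd hw.symm (by simp)
  | cons a u ih =>
      by_cases ha : a = Fin.last n
      · subst ha
        have e1 : (gadDFA n).evalFrom 0 (Fin.last n :: u)
            = (gadDFA n).evalFrom 1 u := by simp [DFA.evalFrom, gadDFA]
        rw [e1]
        constructor
        · intro h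
          cases u with
          | nil => exact ⟨[], rfl⟩
          | cons b u' =>
              have e2 : (gadDFA n).evalFrom 1 (b :: u') = (gadDFA n).evalFrom 2 u' := by
                simp [DFA.evalFrom, gadDFA]
              rw [e2, gadDFA_evalFrom_two] at h
              exact absurd h (by decide)
        · rintro ⟨w, hw⟩
          cases w with
          | nil =>
              simp only [List.map_nil, List.nil_append, List.cons.injEq] at hw
              rw [hw.2]; rfl
          | cons b w' =>
              exfalso
              simp only [List.map_cons, List.cons_append, List.cons.injEq] at hw
              exact Fin.ne_of_lt (Fin.castSucc_lt_last b) hw.1.symm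
      · obtain ⟨b, hb⟩ := Fin.exists_castSucc_eq.2 ha
        have e1 : (gadDFA n).evalFrom 0 (a :: u) = (gadDFA n).evalFrom 0 u := by
          simp [DFA.evalFrom, gadDFA, ha]
        rw [e1, ih]
        constructor
        · rintro ⟨w, hw⟩
          exact ⟨b :: w, by simp [hw, ← hb]⟩
        · rintro ⟨w, hw⟩
          cases w with
          | nil =>
              exfalso
              simp only [List.map_nil, List.nil_append, List.cons.injEq] at hw
              exact ha hw.1
          | cons c w' =>
              simp only [List.map_cons, List.cons_append, List.cons.injEq] at hw
              exact ⟨w', hw.2⟩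

lemma gad_emb_flatMap {n : ℕ} (p : List (Fin n)) (w : List (Fin n)) :
    (w.map Fin.castSucc).flatMap
      (fun i : Fin (n+1) => if hi : (i : ℕ) < n then [(⟨i, hi⟩ : Fin n)] else p) = w := by
  induction w with
  | nil => rfl
  | cons a w ih =>
      simp only [List.map_cons, List.flatMap_cons, ih]
      have : ((a.castSucc : Fin (n+1)) : ℕ) < n := a.isLt
      simp [this]

/-- Cone closure under simultaneous right quotient / right append of fixed words:
from `L`, obtain `{w ++ q | w ++ p ∈ L}`. -/
lemma gad {C : LangClass} (hC : IsCone C) {n : ℕ} (p q : List (Fin n))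
    {L : Set (List (Fin n))} (hL : L ∈ C n) :
    {x | ∃ w, w ++ p ∈ L ∧ w ++ q = x} ∈ C n := by
  obtain ⟨hHom, hInv, hReg⟩ := hC
  set h : Fin (n+1) → List (Fin n) :=
    fun i => if hi : (i : ℕ) < n then [(⟨i, hi⟩ : Fin n)] else p with hdef
  set g : Fin (n+1) → List (Fin n) :=
    fun i => if hi : (i : ℕ) < n then [(⟨i, hi⟩ : Fin n)] else q with gdef
  have L1 : {u : List (Fin (n+1)) | u.flatMap h ∈ L} ∈ C (n+1) := hInv _ _ h L hL
  have hRreg : IsRegularLang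
      {u : List (Fin (n+1)) | ∃ w : List (Fin n), u = w.map Fin.castSucc ++ [Fin.last n]} :=
    ⟨Fin 3, inferInstance, gadDFA n, fun u => (gadDFA_spec n u)⟩
  have L2 := hReg _ _ L1 _ hRreg
  have L3 := hHom _ _ g _ L2
  convert L3 using 1
  ext x
  constructor
  · rintro ⟨w, hwp, rfl⟩
    refine ⟨w.map Fin.castSucc ++ [Fin.last n], ⟨?_, ⟨w, rfl⟩⟩, ?_⟩
    · show (w.map Fin.castSucc ++ [Fin.last n]).flatMap h ∈ L
      rw [List.flatMap_append, gad_emb_flatMap]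
      simpa [hdef] using hwp
    · have e : (w.map Fin.castSucc ++ [Fin.last n]).flatMap g = w ++ q := by
        rw [List.flatMap_append, gad_emb_flatMap]; simp [gdef]
      exact e
  · rintro ⟨u, ⟨hu1, w, rfl⟩, rfl⟩
    refine ⟨w, ?_, ?_⟩
    · have : (w.map Fin.castSucc ++ [Fin.last n]).flatMap h ∈ L := hu1
      rwa [List.flatMap_append, gad_emb_flatMap, (by simp [hdef] : [Fin.last n].flatMap h = p)]
        at this
    · have e : (w.map Fin.castSucc ++ [Fin.last n]).flatMap g = w ++ q := by
        rw [List.flatMap_append, gad_emb_flatMap]; simp [gdef]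
      exact e.symm

variable {G : Type} [Group G]

/-! ### Right cosets, sections, and the coset automaton -/

/-- The right coset `Hg` of `g`, encoded as the left coset `g⁻¹H`. -/
def cosetOf (H : Subgroup G) (g : G) : G ⧸ H := QuotientGroup.mk g⁻¹

lemma cosetOf_mul (H : Subgroup G) (g x : G) :
    cosetOf H (g * x) = x⁻¹ • cosetOf H g := by
  show QuotientGroup.mk ((g * x)⁻¹) = QuotientGroup.mk (x⁻¹ * g⁻¹)
  rw [mul_inv_rev]

lemma cosetOf_eq_iff (H : Subgroup G) (g g' : G) :
    cosetOf H g = cosetOf H g' ↔ g * g'⁻¹ ∈ H := by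
  rw [cosetOf, cosetOf, QuotientGroup.eq, inv_inv]

open Classical in
/-- A section of the right cosets, sending the coset of `1` to `1`. -/
noncomputable def sec (H : Subgroup G) (q : G ⧸ H) : G :=
  if q = cosetOf H 1 then 1 else (Quotient.out q)⁻¹

lemma sec_one (H : Subgroup G) : sec H (cosetOf H 1) = 1 := by
  simp [sec]

lemma cosetOf_sec (H : Subgroup G) (q : G ⧸ H) : cosetOf H (sec H q) = q := by
  by_cases h : q = cosetOf H 1
  · rw [h, sec_one]
  · rw [sec, if_neg h, cosetOf, inv_inv, QuotientGroup.out_eq']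

lemma cosetOf_one_iff (H : Subgroup G) (g : G) : cosetOf H g = cosetOf H 1 ↔ g ∈ H := by
  rw [cosetOf_eq_iff, inv_one, mul_one]

section CosetDFA

variable (H : Subgroup G) {n : ℕ} (π : List (Fin n) → G)

/-- The coset automaton: tracks `(π w)⁻¹ H`. -/
def cosetDFA (g : G) : DFA (Fin n) (G ⧸ H) where
  step s a := (π [a])⁻¹ • s
  start := QuotientGroup.mk 1
  accept := {QuotientGroup.mk g}

lemma cosetDFA_evalFrom (hπ : FreeHomOnto G π) (g : G) :
    ∀ (w : List (Fin n)) (x : G),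
      (cosetDFA H π g).evalFrom (QuotientGroup.mk x) w = QuotientGroup.mk ((π w)⁻¹ * x) := by
  intro w
  induction w with
  | nil => intro x; rw [hπ.map_nil, inv_one, one_mul]; rfl
  | cons a w ih =>
      intro x
      show (cosetDFA H π g).evalFrom ((π [a])⁻¹ • QuotientGroup.mk x) w = _
      have e : (π [a])⁻¹ • (QuotientGroup.mk x : G ⧸ H) = QuotientGroup.mk ((π [a])⁻¹ * x) :=
        rfl
      rw [e, ih]
      have : π (a :: w) = π [a] * π w := hπ.map_append [a] w
      rw [this, mul_inv_rev, mul_assoc]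

lemma cosetReg (hπ : FreeHomOnto G π) [Fintype (G ⧸ H)] (g : G) :
    IsRegularLang {w : List (Fin n) | π w * g ∈ H} := by
  refine ⟨G ⧸ H, inferInstance, cosetDFA H π g, fun w => ?_⟩
  rw [DFA.mem_accepts]
  show (cosetDFA H π g).evalFrom (QuotientGroup.mk 1) w ∈ ({QuotientGroup.mk g} : Set _) ↔ _
  rw [cosetDFA_evalFrom H π hπ g w 1, mul_one, Set.mem_singleton_iff, QuotientGroup.eq,
    inv_inv]
  rfl

end CosetDFA

/-! ### The Schreier transducer -/

section Trans

variable (H : Subgroup G) {n k : ℕ} (π : List (Fin n) → G) (ρ : List (Fin k) → ↥H)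

/-- The Schreier element attached to a (right) coset `q` and letter `a`. -/
noncomputable def selem (q : G ⧸ H) (a : Fin n) : G :=
  sec H q * π [a] * (sec H ((π [a])⁻¹ • q))⁻¹

lemma selem_mem (q : G ⧸ H) (a : Fin n) : selem H π q a ∈ H := by
  have h1 : cosetOf H (sec H q * π [a]) = (π [a])⁻¹ • q := by
    rw [cosetOf_mul, cosetOf_sec]
  have h2 : cosetOf H (sec H ((π [a])⁻¹ • q)) = (π [a])⁻¹ • q := cosetOf_sec H _
  exact (cosetOf_eq_iff H _ _).1 (h1.trans h2.symm)

/-- A word over the generators of `H` representing the Schreier element. -/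
noncomputable def uword (hρ : FreeHomOnto (↥H) ρ) (q : G ⧸ H) (a : Fin n) : List (Fin k) :=
  Function.surjInv hρ.surjective ⟨selem H π q a, selem_mem H π q a⟩

lemma uword_spec (hρ : FreeHomOnto (↥H) ρ) (q : G ⧸ H) (a : Fin n) :
    (ρ (uword H π ρ hρ q a) : G) = selem H π q a := by
  rw [uword, Function.surjInv_eq hρ.surjective]

variable [Fintype (G ⧸ H)]

/-- Code alphabet size for the annotated (coset, letter) alphabet. -/
abbrev tcard (H : Subgroup G) (n : ℕ) [Fintype (G ⧸ H)] : ℕ :=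
  Fintype.card ((G ⧸ H) × Fin n)

/-- Encoding of annotated letters. -/
noncomputable def enc : (G ⧸ H) × Fin n ≃ Fin (tcard H n) :=
  Fintype.equivFin _

/-- Annotation of a word by the cosets traversed while reading it. -/
noncomputable def ann : (G ⧸ H) → List (Fin n) → List (Fin (tcard H n))
  | _, [] => []
  | q, a :: w => enc H (q, a) :: ann ((π [a])⁻¹ • q) w

/-- The coset reached after reading a word. -/
def endq (q : G ⧸ H) (w : List (Fin n)) : G ⧸ H :=
  w.foldl (fun s a => (π [a])⁻¹ • s) q

omit [Fintype (G ⧸ H)] in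
@[simp] lemma endq_nil (q : G ⧸ H) : endq H π q [] = q := rfl

omit [Fintype (G ⧸ H)] in
@[simp] lemma endq_cons (q : G ⧸ H) (a : Fin n) (w : List (Fin n)) :
    endq H π q (a :: w) = endq H π ((π [a])⁻¹ • q) w := rfl

omit [Fintype (G ⧸ H)] in
lemma endq_cosetOf (hπ : FreeHomOnto G π) :
    ∀ (w : List (Fin n)) (g : G), endq H π (cosetOf H g) w = cosetOf H (g * π w) := by
  intro w
  induction w with
  | nil => intro g; rw [endq_nil, hπ.map_nil, mul_one]
  | cons a w ih =>
      intro g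
      rw [endq_cons, ← cosetOf_mul, ih (g * π [a])]
      have : π (a :: w) = π [a] * π w := hπ.map_append [a] w
      rw [this, mul_assoc]

/-- First projection homomorphism: erase annotations. -/
noncomputable def ggl : Fin (tcard H n) → List (Fin n) :=
  fun c => [((enc H).symm c).2]

/-- Output homomorphism of the Schreier transducer. -/
noncomputable def hhl (hρ : FreeHomOnto (↥H) ρ) : Fin (tcard H n) → List (Fin k) :=
  fun c => uword H π ρ hρ (((enc H).symm c).1) (((enc H).symm c).2)

lemma ggl_ann : ∀ (w : List (Fin n)) (q : G ⧸ H), (ann H π q w).flatMap (ggl H) = w := by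
  intro w
  induction w with
  | nil => intro q; rfl
  | cons a w ih =>
      intro q
      rw [ann, List.flatMap_cons, ih]
      simp [ggl]

lemma hhl_ann (hπ : FreeHomOnto G π) (hρ : FreeHomOnto (↥H) ρ) :
    ∀ (w : List (Fin n)) (q : G ⧸ H),
      ((ρ ((ann H π q w).flatMap (hhl H π ρ hρ)) : ↥H) : G)
        = sec H q * π w * (sec H (endq H π q w))⁻¹ := by
  intro w
  induction w with
  | nil =>
      intro q
      show ((ρ [] : ↥H) : G) = _
      rw [hρ.map_nil, endq_nil, hπ.map_nil, mul_one, mul_inv_cancel]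
      rfl
  | cons a w ih =>
      intro q
      rw [ann, List.flatMap_cons, hρ.map_append]
      push_cast
      rw [show hhl H π ρ hρ (enc H (q, a)) = uword H π ρ hρ q a by simp [hhl],
        uword_spec, ih ((π [a])⁻¹ • q), endq_cons, selem]
      have : π (a :: w) = π [a] * π w := hπ.map_append [a] w
      rw [this]
      group

lemma hhl_ann_of_mem (hπ : FreeHomOnto G π) (hρ : FreeHomOnto (↥H) ρ)
    {w : List (Fin n)} (hw : π w ∈ H) :
    ((ρ ((ann H π (cosetOf H 1) w).flatMap (hhl H π ρ hρ)) : ↥H) : G) = π w := by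
  rw [hhl_ann H π ρ hπ hρ w (cosetOf H 1), endq_cosetOf H π hπ w 1, one_mul,
    (cosetOf_one_iff H (π w)).2 hw, sec_one, one_mul, inv_one, mul_one]

open Classical in
/-- DFA checking that an annotated word is a valid run of the coset automaton from the
trivial coset back to itself. -/
noncomputable def runDFA : DFA (Fin (tcard H n)) (Option (G ⧸ H)) where
  step s c := match s with
    | none => none
    | some q =>
        if ((enc H).symm c).1 = q then some ((π [((enc H).symm c).2])⁻¹ • q) else none
  start := some (cosetOf H 1)
  accept := {some (cosetOf H 1)}

lemma runDFA_none : ∀ u : List (Fin (tcard H n)), (runDFA H π).evalFrom none u = none := by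
  intro u
  induction u with
  | nil => rfl
  | cons c u ih => exact ih

lemma runDFA_ann : ∀ (w : List (Fin n)) (q : G ⧸ H),
    (runDFA H π).evalFrom (some q) (ann H π q w) = some (endq H π q w) := by
  intro w
  induction w with
  | nil => intro q; rfl
  | cons a w ih =>
      intro q
      rw [ann]
      have hstep : (runDFA H π).step (some q) (enc H (q, a)) = some ((π [a])⁻¹ • q) := by
        simp [runDFA]
      show (runDFA H π).evalFrom ((runDFA H π).step (some q) (enc H (q, a))) (ann H π _ w)
          = _
      rw [hstep, ih ((π [a])⁻¹ • q), endq_cons]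

lemma runDFA_inv : ∀ (u : List (Fin (tcard H n))) (q q' : G ⧸ H),
    (runDFA H π).evalFrom (some q) u = some q' → ∃ w, u = ann H π q w := by
  intro u
  induction u with
  | nil => exact fun q q' _ => ⟨[], rfl⟩
  | cons c u ih =>
      intro q q' h
      have hs : (runDFA H π).evalFrom ((runDFA H π).step (some q) c) u = some q' := h
      by_cases hc : ((enc H).symm c).1 = q
      · have hstep : (runDFA H π).step (some q) c
            = some ((π [((enc H).symm c).2])⁻¹ • q) := by
          simp [runDFA, hc]
        rw [hstep] at hs
        obtain ⟨w, hw⟩ := ih _ _ hs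
        refine ⟨((enc H).symm c).2 :: w, ?_⟩
        rw [ann, ← hw]
        congr 1
        rw [← hc]
        exact ((enc H).apply_symm_apply c).symm
      · have hstep : (runDFA H π).step (some q) c = none := by
          simp [runDFA, hc]
        rw [hstep, runDFA_none] at hs
        exact absurd hs (by simp)

lemma runDFA_spec (hπ : FreeHomOnto G π) (u : List (Fin (tcard H n))) :
    u ∈ (runDFA H π).accepts ↔ ∃ w, u = ann H π (cosetOf H 1) w ∧ π w ∈ H := by
  rw [DFA.mem_accepts]
  show (runDFA H π).evalFrom (some (cosetOf H 1)) u ∈ ({some (cosetOf H 1)} : Set _) ↔ _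
  rw [Set.mem_singleton_iff]
  constructor
  · intro h
    obtain ⟨w, rfl⟩ := runDFA_inv H π u _ _ h
    rw [runDFA_ann] at h
    have := Option.some.inj h
    rw [endq_cosetOf H π hπ w 1, one_mul] at this
    exact ⟨w, rfl, (cosetOf_one_iff H (π w)).1 this⟩
  · rintro ⟨w, rfl, hw⟩
    rw [runDFA_ann, endq_cosetOf H π hπ w 1, one_mul]
    rw [(cosetOf_one_iff H (π w)).2 hw]

end Trans

end S9


namespace S9

/-! ### Flatness of finite-index subgroups, and the four transfer directions -/

section Flat

variable {G : Type} [Group G] (H : Subgroup G) {n k : ℕ}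
  (π : List (Fin n) → G) (ρ : List (Fin k) → ↥H) {C : LangClass}

/-- Letter-wise lifting of `ρ` through `π`. -/
noncomputable def lift (hπ : FreeHomOnto G π) : Fin k → List (Fin n) :=
  fun b => Function.surjInv hπ.surjective ((ρ [b] : ↥H) : G)

lemma lift_spec (hπ : FreeHomOnto G π) (hρ : FreeHomOnto (↥H) ρ) (u : List (Fin k)) :
    π (u.flatMap (lift H π ρ hπ)) = ((ρ u : ↥H) : G) := by
  refine PreHom.eq_of_letters (φ := fun u => π (u.flatMap (lift H π ρ hπ)))
    (ψ := fun u => ((ρ u : ↥H) : G)) ⟨?_, ?_⟩ ⟨?_, ?_⟩ ?_ u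
  · show π ([].flatMap (lift H π ρ hπ)) = 1
    rw [List.flatMap_nil, hπ.map_nil]
  · intro u v
    show π ((u ++ v).flatMap (lift H π ρ hπ)) = _
    rw [List.flatMap_append, hπ.map_append]
  · show ((ρ [] : ↥H) : G) = 1
    rw [hρ.map_nil]; rfl
  · intro u v
    show ((ρ (u ++ v) : ↥H) : G) = _
    rw [hρ.map_append]; rfl
  · intro b
    show π ([b].flatMap (lift H π ρ hπ)) = ((ρ [b] : ↥H) : G)
    rw [List.flatMap_cons, List.flatMap_nil, List.append_nil]
    exact Function.surjInv_eq hπ.surjective _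

lemma flat_forall_down (hC : IsCone C) (hπ : FreeHomOnto G π) (hρ : FreeHomOnto (↥H) ρ)
    (X' : Set ↥H) (h : {w : List (Fin n) | π w ∈ Subtype.val '' X'} ∈ C n) :
    {u : List (Fin k) | ρ u ∈ X'} ∈ C k := by
  have h2 := hC.2.1 _ _ (lift H π ρ hπ) _ h
  convert h2 using 1
  ext u
  show ρ u ∈ X' ↔ π (u.flatMap (lift H π ρ hπ)) ∈ Subtype.val '' X'
  rw [lift_spec H π ρ hπ hρ]
  exact (Subtype.val_injective.mem_set_image).symm

lemma flat_forall_up [Fintype (G ⧸ H)] (hC : IsCone C) (hπ : FreeHomOnto G π)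
    (hρ : FreeHomOnto (↥H) ρ) (X' : Set ↥H)
    (h : {u : List (Fin k) | ρ u ∈ X'} ∈ C k) :
    {w : List (Fin n) | π w ∈ Subtype.val '' X'} ∈ C n := by
  obtain ⟨hHom, hInv, hReg⟩ := hC
  have L2 : {u : List (Fin (tcard H n)) | u.flatMap (hhl H π ρ hρ) ∈
      {u : List (Fin k) | ρ u ∈ X'}} ∈ C (tcard H n) := hInv _ _ _ _ h
  have hRun : IsRegularLang {u : List (Fin (tcard H n)) | u ∈ (runDFA H π).accepts} :=
    ⟨Option (G ⧸ H), inferInstance, runDFA H π, fun u => Iff.rfl⟩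
  have L3 := hReg _ _ L2 _ hRun
  have L4 := hHom _ _ (ggl H) _ L3
  convert L4 using 1
  ext x
  constructor
  · intro hx
    obtain ⟨x', hx', hval⟩ := hx
    have hxH : π x ∈ H := hval ▸ x'.2
    refine ⟨ann H π (cosetOf H 1) x, ⟨?_, ?_⟩, ?_⟩
    · show ρ ((ann H π (cosetOf H 1) x).flatMap (hhl H π ρ hρ)) ∈ X'
      have hv := hhl_ann_of_mem H π ρ hπ hρ hxH
      have e : ρ ((ann H π (cosetOf H 1) x).flatMap (hhl H π ρ hρ)) = x' :=
        Subtype.val_injective (hv.trans hval.symm)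
      rw [e]; exact hx'
    · show ann H π (cosetOf H 1) x ∈ (runDFA H π).accepts
      rw [runDFA_spec H π hπ]
      exact ⟨x, rfl, hxH⟩
    · exact ggl_ann H π x (cosetOf H 1)
  · rintro ⟨u, ⟨hu1, hu2⟩, rfl⟩
    obtain ⟨w, rfl, hwH⟩ := (runDFA_spec H π hπ u).1 hu2
    show (ann H π (cosetOf H 1) w).flatMap (ggl H) ∈ {w | π w ∈ Subtype.val '' X'}
    rw [ggl_ann]
    exact ⟨_, hu1, hhl_ann_of_mem H π ρ hπ hρ hwH⟩

lemma flat_exists_up (hC : IsCone C) (hπ : FreeHomOnto G π) (hρ : FreeHomOnto (↥H) ρ)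
    (X' : Set ↥H) (h : ∃ L ∈ C k, ρ '' L = X') :
    ∃ L ∈ C n, π '' L = Subtype.val '' X' := by
  obtain ⟨L, hL, rfl⟩ := h
  refine ⟨_, hC.1 _ _ (lift H π ρ hπ) _ hL, ?_⟩
  rw [← Set.image_comp, ← Set.image_comp]
  exact Set.image_congr' (fun u => lift_spec H π ρ hπ hρ u)

lemma flat_exists_down [Fintype (G ⧸ H)] (hC : IsCone C) (hπ : FreeHomOnto G π)
    (hρ : FreeHomOnto (↥H) ρ) (X' : Set ↥H)
    (h : ∃ L ∈ C n, π '' L = Subtype.val '' X') :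
    ∃ L ∈ C k, ρ '' L = X' := by
  obtain ⟨L, hL, hLim⟩ := h
  obtain ⟨hHom, hInv, hReg⟩ := hC
  have L2 : {u : List (Fin (tcard H n)) | u.flatMap (ggl H) ∈ L} ∈ C (tcard H n) :=
    hInv _ _ _ _ hL
  have hRun : IsRegularLang {u : List (Fin (tcard H n)) | u ∈ (runDFA H π).accepts} :=
    ⟨Option (G ⧸ H), inferInstance, runDFA H π, fun u => Iff.rfl⟩
  have L3 := hReg _ _ L2 _ hRun
  have L4 := hHom _ _ (hhl H π ρ hρ) _ L3
  refine ⟨_, L4, ?_⟩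
  ext x'
  constructor
  · rintro ⟨v, ⟨u, ⟨hu1, hu2⟩, rfl⟩, rfl⟩
    obtain ⟨w, rfl, hwH⟩ := (runDFA_spec H π hπ u).1 hu2
    have hval := hhl_ann_of_mem H π ρ hπ hρ hwH
    have hmem : π w ∈ Subtype.val '' X' := by
      rw [← hLim]
      have hwL : w ∈ L := by
        have := hu1
        rwa [Set.mem_setOf_eq, ggl_ann] at this
      exact ⟨w, hwL, rfl⟩
    obtain ⟨y, hy, hyval⟩ := hmem
    have e : ρ ((ann H π (cosetOf H 1) w).flatMap (hhl H π ρ hρ)) = y :=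
      Subtype.val_injective (hval.trans hyval.symm)
    rw [e]; exact hy
  · intro hx'
    have hmem : (x' : G) ∈ π '' L := by
      rw [hLim]; exact ⟨x', hx', rfl⟩
    obtain ⟨w, hwL, hwval⟩ := hmem
    have hwH : π w ∈ H := hwval ▸ x'.2
    refine ⟨(ann H π (cosetOf H 1) w).flatMap (hhl H π ρ hρ),
      ⟨ann H π (cosetOf H 1) w, ⟨?_, ?_⟩, rfl⟩, ?_⟩
    · show (ann H π (cosetOf H 1) w).flatMap (ggl H) ∈ L
      rw [ggl_ann]; exact hwL
    · show ann H π (cosetOf H 1) w ∈ (runDFA H π).accepts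
      rw [runDFA_spec H π hπ]; exact ⟨w, rfl, hwH⟩
    · exact Subtype.val_injective
        (by rw [hhl_ann_of_mem H π ρ hπ hρ hwH, hwval])

end Flat

/-! ### Translation gadgets phrased for group images/preimages -/

section Translate

variable {G : Type} [Group G] {n : ℕ} {C : LangClass}

lemma gad_pre (hC : IsCone C) (π : List (Fin n) → G) (hπ : FreeHomOnto G π)
    {Z : Set G} (h : {w : List (Fin n) | π w ∈ Z} ∈ C n) (t : G) :
    {w : List (Fin n) | π w * t ∈ Z} ∈ C n := by
  obtain ⟨v, hv⟩ := hπ.surjective t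
  have hg := gad hC v [] h
  convert hg using 1
  ext x
  constructor
  · intro hx
    refine ⟨x, ?_, List.append_nil x⟩
    show π (x ++ v) ∈ Z
    rw [hπ.map_append, hv]
    exact hx
  · rintro ⟨w, hw, rfl⟩
    show π (w ++ []) * t ∈ Z
    rw [List.append_nil]
    have : π (w ++ v) ∈ Z := hw
    rwa [hπ.map_append, hv] at this

lemma gad_im (hC : IsCone C) (π : List (Fin n) → G) (hπ : FreeHomOnto G π)
    {L : Set (List (Fin n))} (hL : L ∈ C n) (t : G) :
    ∃ L' ∈ C n, π '' L' = (fun g => g * t) '' (π '' L) := by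
  obtain ⟨v, hv⟩ := hπ.surjective t
  refine ⟨_, gad hC [] v hL, ?_⟩
  ext g
  constructor
  · rintro ⟨x, ⟨w, hw, rfl⟩, rfl⟩
    rw [List.append_nil] at hw
    refine ⟨π w, ⟨w, hw, rfl⟩, ?_⟩
    rw [hπ.map_append, hv]
  · rintro ⟨y, ⟨w, hw, rfl⟩, rfl⟩
    refine ⟨w ++ v, ⟨w, ?_, rfl⟩, ?_⟩
    · rw [List.append_nil]; exact hw
    · rw [hπ.map_append, hv]

lemma image_inter_pre (π : List (Fin n) → G) (L : Set (List (Fin n))) (S : Set G) :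
    π '' (L ∩ {w | π w ∈ S}) = π '' L ∩ S := by
  ext g
  constructor
  · rintro ⟨w, ⟨hwL, hwS⟩, rfl⟩
    exact ⟨⟨w, hwL, rfl⟩, hwS⟩
  · rintro ⟨⟨w, hwL, rfl⟩, hgS⟩
    exact ⟨w, ⟨hwL, hgS⟩, rfl⟩

end Translate

end S9


namespace S9

section Directions

variable {G : Type} [Group G] {n k : ℕ} {C : LangClass}
  (H : Subgroup G) (π : List (Fin n) → G) (ρ : List (Fin k) → ↥H)

lemma dirA [Fintype (G ⧸ H)] (hC : IsCone C) (hπ : FreeHomOnto G π)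
    (hρ : FreeHomOnto (↥H) ρ)
    (hG : ∀ X Y : Set G, CForall C π X → CForall C π Y → CForall C π (X ∩ Y))
    (X Y : Set ↥H) (hX : CForall C ρ X) (hY : CForall C ρ Y) :
    CForall C ρ (X ∩ Y) := by
  have hX' : CForall C π (Subtype.val '' X) := flat_forall_up H π ρ hC hπ hρ X hX
  have hY' : CForall C π (Subtype.val '' Y) := flat_forall_up H π ρ hC hπ hρ Y hY
  have hI := hG _ _ hX' hY'
  rw [← Set.image_inter Subtype.val_injective] at hI
  exact flat_forall_down H π ρ hC hπ hρ (X ∩ Y) hI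

lemma dirC [Fintype (G ⧸ H)] (hC : IsCone C) (hπ : FreeHomOnto G π)
    (hρ : FreeHomOnto (↥H) ρ)
    (hG : ∀ X Y : Set G, CExists C π X → CExists C π Y → CExists C π (X ∩ Y))
    (X Y : Set ↥H) (hX : CExists C ρ X) (hY : CExists C ρ Y) :
    CExists C ρ (X ∩ Y) := by
  have hX' : CExists C π (Subtype.val '' X) := flat_exists_up H π ρ hC hπ hρ X hX
  have hY' : CExists C π (Subtype.val '' Y) := flat_exists_up H π ρ hC hπ hρ Y hY
  have hI := hG _ _ hX' hY'
  rw [← Set.image_inter Subtype.val_injective] at hI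
  exact flat_exists_down H π ρ hC hπ hρ (X ∩ Y) hI

lemma val_image_preimage {H : Subgroup G} {Z : Set G} (hZ : ∀ g ∈ Z, g ∈ H) :
    Subtype.val '' (Subtype.val ⁻¹' Z : Set ↥H) = Z := by
  ext g
  constructor
  · rintro ⟨y, hy, rfl⟩
    exact hy
  · intro hg
    exact ⟨⟨g, hZ g hg⟩, hg, rfl⟩

lemma cover_coset (H : Subgroup G) (Z : Set G) :
    Z = ⋃ q : G ⧸ H, (Z ∩ {g | g * (sec H q)⁻¹ ∈ H}) := by
  ext g
  simp only [Set.mem_iUnion, Set.mem_inter_iff, Set.mem_setOf_eq]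
  constructor
  · intro hg
    refine ⟨cosetOf H g, hg, ?_⟩
    exact (cosetOf_eq_iff H _ _).1 (cosetOf_sec H (cosetOf H g)).symm
  · rintro ⟨q, hg, _⟩
    exact hg

lemma dirB [Fintype (G ⧸ H)] (hC : IsCone C) (hU : ClosedUnderUnion C)
    (hπ : FreeHomOnto G π) (hρ : FreeHomOnto (↥H) ρ)
    (hH : ∀ X Y : Set ↥H, CForall C ρ X → CForall C ρ Y → CForall C ρ (X ∩ Y))
    (X Y : Set G) (hX : CForall C π X) (hY : CForall C π Y) :
    CForall C π (X ∩ Y) := by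
  have main : ∀ q : G ⧸ H,
      {w : List (Fin n) | π w ∈ X ∩ Y ∩ {g | g * (sec H q)⁻¹ ∈ H}} ∈ C n := by
    intro q
    have hXC : {w : List (Fin n) | π w ∈ X ∩ {g | g * (sec H q)⁻¹ ∈ H}} ∈ C n := by
      have e : {w : List (Fin n) | π w ∈ X ∩ {g | g * (sec H q)⁻¹ ∈ H}}
          = {w | π w ∈ X} ∩ {w | π w * (sec H q)⁻¹ ∈ H} := rfl
      rw [e]
      exact hC.2.2 _ _ hX _ (cosetReg H π hπ (sec H q)⁻¹)
    have hYC : {w : List (Fin n) | π w ∈ Y ∩ {g | g * (sec H q)⁻¹ ∈ H}} ∈ C n := by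
      have e : {w : List (Fin n) | π w ∈ Y ∩ {g | g * (sec H q)⁻¹ ∈ H}}
          = {w | π w ∈ Y} ∩ {w | π w * (sec H q)⁻¹ ∈ H} := rfl
      rw [e]
      exact hC.2.2 _ _ hY _ (cosetReg H π hπ (sec H q)⁻¹)
    -- the translated pieces, as subsets of `H`
    have hXqC : {w : List (Fin n) |
        π w ∈ {g : G | g * sec H q ∈ X ∩ {g | g * (sec H q)⁻¹ ∈ H}}} ∈ C n :=
      gad_pre hC π hπ hXC (sec H q)
    have hYqC : {w : List (Fin n) |
        π w ∈ {g : G | g * sec H q ∈ Y ∩ {g | g * (sec H q)⁻¹ ∈ H}}} ∈ C n :=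
      gad_pre hC π hπ hYC (sec H q)
    have hXqH : ∀ g ∈ {g : G | g * sec H q ∈ X ∩ {g | g * (sec H q)⁻¹ ∈ H}}, g ∈ H := by
      intro g hg
      have := hg.2
      rwa [Set.mem_setOf_eq, mul_inv_cancel_right] at this
    have hYqH : ∀ g ∈ {g : G | g * sec H q ∈ Y ∩ {g | g * (sec H q)⁻¹ ∈ H}}, g ∈ H := by
      intro g hg
      have := hg.2
      rwa [Set.mem_setOf_eq, mul_inv_cancel_right] at this
    have hXval := val_image_preimage (H := H) hXqH
    have hYval := val_image_preimage (H := H) hYqH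
    have hX' : CForall C ρ (Subtype.val ⁻¹'
        {g : G | g * sec H q ∈ X ∩ {g | g * (sec H q)⁻¹ ∈ H}}) := by
      refine flat_forall_down H π ρ hC hπ hρ _ ?_
      rw [hXval]
      exact hXqC
    have hY' : CForall C ρ (Subtype.val ⁻¹'
        {g : G | g * sec H q ∈ Y ∩ {g | g * (sec H q)⁻¹ ∈ H}}) := by
      refine flat_forall_down H π ρ hC hπ hρ _ ?_
      rw [hYval]
      exact hYqC
    have hI := hH _ _ hX' hY'
    have hIG := flat_forall_up H π ρ hC hπ hρ _ hI
    rw [Set.image_inter Subtype.val_injective, hXval, hYval] at hIG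
    have hfin := gad_pre hC π hπ hIG (sec H q)⁻¹
    have e3 : {w : List (Fin n) | π w * (sec H q)⁻¹ ∈
          ({g : G | g * sec H q ∈ X ∩ {g | g * (sec H q)⁻¹ ∈ H}}
            ∩ {g : G | g * sec H q ∈ Y ∩ {g | g * (sec H q)⁻¹ ∈ H}})}
        = {w : List (Fin n) | π w ∈ X ∩ Y ∩ {g | g * (sec H q)⁻¹ ∈ H}} := by
      ext w
      simp only [Set.mem_setOf_eq, Set.mem_inter_iff, inv_mul_cancel_right]
      tauto
    rw [e3] at hfin
    exact hfin
  show {w : List (Fin n) | π w ∈ X ∩ Y} ∈ C n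
  have cover := cover_coset H (X ∩ Y)
  have e : {w : List (Fin n) | π w ∈ X ∩ Y}
      = ⋃ q : G ⧸ H, {w : List (Fin n) | π w ∈ X ∩ Y ∩ {g | g * (sec H q)⁻¹ ∈ H}} := by
    conv_lhs => rw [cover]
    ext w
    simp only [Set.mem_iUnion, Set.mem_setOf_eq]
  rw [e]
  exact union_fin hU _ main

lemma dirD [Fintype (G ⧸ H)] (hC : IsCone C) (hU : ClosedUnderUnion C)
    (hπ : FreeHomOnto G π) (hρ : FreeHomOnto (↥H) ρ)
    (hH : ∀ X Y : Set ↥H, CExists C ρ X → CExists C ρ Y → CExists C ρ (X ∩ Y))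
    (X Y : Set G) (hX : CExists C π X) (hY : CExists C π Y) :
    CExists C π (X ∩ Y) := by
  have main : ∀ q : G ⧸ H,
      ∃ L ∈ C n, π '' L = X ∩ Y ∩ {g | g * (sec H q)⁻¹ ∈ H} := by
    intro q
    -- translated pieces as C^∃ subsets
    have piece : ∀ Z : Set G, CExists C π Z →
        CExists C π {g : G | g * sec H q ∈ Z ∩ {g | g * (sec H q)⁻¹ ∈ H}} := by
      rintro Z ⟨L, hL, rfl⟩
      have h1 : L ∩ {w : List (Fin n) | π w * (sec H q)⁻¹ ∈ H} ∈ C n :=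
        hC.2.2 _ _ hL _ (cosetReg H π hπ (sec H q)⁻¹)
      obtain ⟨L', hL', hL'im⟩ := gad_im hC π hπ h1 (sec H q)⁻¹
      refine ⟨L', hL', ?_⟩
      have e0 : (L ∩ {w : List (Fin n) | π w * (sec H q)⁻¹ ∈ H})
          = (L ∩ {w | π w ∈ ({g | g * (sec H q)⁻¹ ∈ H} : Set G)}) := rfl
      rw [hL'im, e0, image_inter_pre π L {g | g * (sec H q)⁻¹ ∈ H}]
      ext g
      simp only [Set.mem_image, Set.mem_inter_iff, Set.mem_setOf_eq]
      constructor
      · rintro ⟨y, hy, rfl⟩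
        rw [inv_mul_cancel_right]
        exact hy
      · intro hg
        refine ⟨g * sec H q, ?_, mul_inv_cancel_right _ _⟩
        rw [mul_inv_cancel_right]
        exact ⟨hg.1, by simpa [mul_inv_cancel_right] using hg.2⟩
    have hXq := piece X hX
    have hYq := piece Y hY
    have hXqH : ∀ g ∈ {g : G | g * sec H q ∈ X ∩ {g | g * (sec H q)⁻¹ ∈ H}}, g ∈ H := by
      intro g hg
      have := hg.2
      rwa [Set.mem_setOf_eq, mul_inv_cancel_right] at this
    have hYqH : ∀ g ∈ {g : G | g * sec H q ∈ Y ∩ {g | g * (sec H q)⁻¹ ∈ H}}, g ∈ H := by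
      intro g hg
      have := hg.2
      rwa [Set.mem_setOf_eq, mul_inv_cancel_right] at this
    have hXval := val_image_preimage (H := H) hXqH
    have hYval := val_image_preimage (H := H) hYqH
    have hX' : CExists C ρ (Subtype.val ⁻¹'
        {g : G | g * sec H q ∈ X ∩ {g | g * (sec H q)⁻¹ ∈ H}}) := by
      refine flat_exists_down H π ρ hC hπ hρ _ ?_
      rw [hXval]
      exact hXq
    have hY' : CExists C ρ (Subtype.val ⁻¹'
        {g : G | g * sec H q ∈ Y ∩ {g | g * (sec H q)⁻¹ ∈ H}}) := by
      refine flat_exists_down H π ρ hC hπ hρ _ ?_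
      rw [hYval]
      exact hYq
    have hI := hH _ _ hX' hY'
    have hIG := flat_exists_up H π ρ hC hπ hρ _ hI
    rw [Set.image_inter Subtype.val_injective, hXval, hYval] at hIG
    obtain ⟨Lq, hLq, hLqim⟩ := hIG
    obtain ⟨Lq', hLq', hLq'im⟩ := gad_im hC π hπ hLq (sec H q)
    refine ⟨Lq', hLq', ?_⟩
    rw [hLq'im, hLqim]
    ext g
    simp only [Set.mem_image, Set.mem_inter_iff, Set.mem_setOf_eq]
    constructor
    · rintro ⟨y, ⟨⟨hy1, hy2⟩, ⟨hy3, _⟩⟩, rfl⟩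
      exact ⟨⟨hy1, hy3⟩, hy2⟩
    · rintro ⟨⟨hg1, hg2⟩, hg3⟩
      refine ⟨g * (sec H q)⁻¹, ?_, inv_mul_cancel_right _ _⟩
      simp only [inv_mul_cancel_right]
      exact ⟨⟨hg1, hg3⟩, hg2, hg3⟩
  choose Lfun hLmem hLim using main
  refine ⟨⋃ q, Lfun q, union_fin hU _ hLmem, ?_⟩
  rw [Set.image_iUnion]
  have e : (⋃ q, π '' Lfun q)
      = ⋃ q : G ⧸ H, (X ∩ Y ∩ {g | g * (sec H q)⁻¹ ∈ H}) := Set.iUnion_congr hLim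
  rw [e]
  exact (cover_coset H (X ∩ Y)).symm

end Directions

end S9


/-- Let `C` be a full semi-AFL, `G` a finitely generated group and
`H ≤ G` of finite index.  Then, for each `• ∈ {∀, ∃}`, the family `C^•(G)` is closed
under binary intersection iff the family `C^•(H)` is. -/
theorem stmt9 (C : LangClass) (hC : IsFullSemiAFL C)
    {G : Type} [Group G] {n k : ℕ} (π : List (Fin n) → G) (hπ : FreeHomOnto G π)
    (H : Subgroup G) (hfi : H.FiniteIndex)
    (ρ : List (Fin k) → ↥H) (hρ : FreeHomOnto (↥H) ρ) :
    ((∀ X Y : Set G, CForall C π X → CForall C π Y → CForall C π (X ∩ Y)) ↔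
      (∀ X Y : Set ↥H, CForall C ρ X → CForall C ρ Y → CForall C ρ (X ∩ Y))) ∧
    ((∀ X Y : Set G, CExists C π X → CExists C π Y → CExists C π (X ∩ Y)) ↔
      (∀ X Y : Set ↥H, CExists C ρ X → CExists C ρ Y → CExists C ρ (X ∩ Y))) := by
  classical
  obtain ⟨hCone, hU⟩ := hC
  have hfin : Finite (G ⧸ H) := (Nat.card_ne_zero.mp hfi.index_ne_zero).2
  letI : Fintype (G ⧸ H) := Fintype.ofFinite _
  refine ⟨⟨?_, ?_⟩, ⟨?_, ?_⟩⟩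
  · intro hG X Y hX hY
    exact S9.dirA H π ρ hCone hπ hρ hG X Y hX hY
  · intro hHc X Y hX hY
    exact S9.dirB H π ρ hCone hU hπ hρ hHc X Y hX hY
  · intro hG X Y hX hY
    exact S9.dirC H π ρ hCone hπ hρ hG X Y hX hY
  · intro hHc X Y hX hY
    exact S9.dirD H π ρ hCone hU hπ hρ hHc X Y hX hY
end

section
/- Let 𝐂 be a class of languages closed under inverse homomorphism. (1) If M is a finitely generated monoid that is 𝐂^•-flat (as a monoid, • ∈ {∀, ∃}) and N ≤ M is a finitely generated submonoid, then N is 𝐂^•-flat (as a monoid). (2) If G is a finitely generated group that is 𝐂^•-flat (as a group) and H ≤ G is a finitely generated subgroup, then H is 𝐂^•-flat (as a group). -/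
section Stmt13Aux

variable (C : LangClass)

private lemma keyMonoid {M : Type} [Monoid M]
    (hMfg : ∃ (n : ℕ) (π : List (Fin n) → M), FreeHomOnto M π)
    (N : Submonoid M) :
    (MonoidCForallFlat C M → MonoidCForallFlat C ↥N) ∧
    (MonoidCExistsFlat C M → MonoidCExistsFlat C ↥N) := by
  obtain ⟨m, πM, hπM⟩ := hMfg
  have main : ∀ (P : Submonoid ↥N) (k : ℕ) (ρ : List (Fin k) → ↥P),
      FreeHomOnto (↥P) ρ →
      ∃ (ρ' : List (Fin k) → ↥(P.map N.subtype)),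
        FreeHomOnto (↥(P.map N.subtype)) ρ' ∧
        ∀ w, (ρ' w : M) = ((ρ w : ↥N) : M) := by
    intro P k ρ hρ
    refine ⟨fun w => ⟨((ρ w : ↥N) : M), Submonoid.mem_map.mpr ⟨(ρ w : ↥N), (ρ w).2, rfl⟩⟩,
      ⟨?_, ?_, ?_⟩, fun w => rfl⟩
    · ext; simp [hρ.map_nil]
    · intro u v; ext; simp [hρ.map_append]
    · rintro ⟨y, hy⟩
      obtain ⟨x, hxP, hx⟩ := Submonoid.mem_map.mp hy
      obtain ⟨w, hw⟩ := hρ.surjective ⟨x, hxP⟩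
      exact ⟨w, by ext; simp [hw]; exact hx⟩
  constructor
  · intro hflat P n k π ρ hπ hρ X hX
    obtain ⟨ρ', hρ', hval⟩ := main P k ρ hρ
    set Y : Set M := Subtype.val '' X with hY
    have hYN : Y ⊆ (N : Set M) := by rintro _ ⟨x, _, rfl⟩; exact x.2
    have hYP : Y ⊆ ((P.map N.subtype : Submonoid M) : Set M) := by
      rintro _ ⟨x, hx, rfl⟩; exact Submonoid.mem_map.mpr ⟨x, hX hx, rfl⟩
    have h1 := hflat N m n πM π hπM hπ Y hYN
    have h2 := hflat (P.map N.subtype) m k πM ρ' hπM hρ' Y hYP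
    have hXeq : (Subtype.val ⁻¹' Y : Set ↥N) = X :=
      Set.preimage_image_eq X Subtype.val_injective
    rw [hXeq] at h1
    refine (h1.symm.trans h2).trans ?_
    unfold CForall
    have hset : {w : List (Fin k) | ρ' w ∈ Subtype.val ⁻¹' Y} =
        {w : List (Fin k) | ρ w ∈ Subtype.val ⁻¹' X} := by
      ext w
      simp only [Set.mem_setOf_eq, Set.mem_preimage, hval, hY]
      constructor
      · rintro ⟨x, hx, hxe⟩
        have : x = ((ρ w : ↥P) : ↥N) := Subtype.val_injective hxe
        rwa [← this]
      · intro h; exact ⟨((ρ w : ↥P) : ↥N), h, rfl⟩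
    rw [hset]
  · intro hflat P n k π ρ hπ hρ X hX
    obtain ⟨ρ', hρ', hval⟩ := main P k ρ hρ
    set Y : Set M := Subtype.val '' X with hY
    have hYN : Y ⊆ (N : Set M) := by rintro _ ⟨x, _, rfl⟩; exact x.2
    have hYP : Y ⊆ ((P.map N.subtype : Submonoid M) : Set M) := by
      rintro _ ⟨x, hx, rfl⟩; exact Submonoid.mem_map.mpr ⟨x, hX hx, rfl⟩
    have h1 := hflat N m n πM π hπM hπ Y hYN
    have h2 := hflat (P.map N.subtype) m k πM ρ' hπM hρ' Y hYP
    have hXeq : (Subtype.val ⁻¹' Y : Set ↥N) = X :=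
      Set.preimage_image_eq X Subtype.val_injective
    rw [hXeq] at h1
    refine (h1.symm.trans h2).trans ?_
    unfold CExists
    constructor
    · rintro ⟨L, hL, hLeq⟩
      refine ⟨L, hL, ?_⟩
      ext x
      constructor
      · rintro ⟨w, hw, rfl⟩
        have : ρ' w ∈ Subtype.val ⁻¹' Y := hLeq ▸ ⟨w, hw, rfl⟩
        simp only [Set.mem_preimage, hval] at this
        obtain ⟨z, hz, hze⟩ := this
        have : z = (ρ w : ↥N) := Subtype.val_injective hze
        simpa [Set.mem_preimage, ← this]
      · intro hx
        have hx' : ((x : ↥N) : M) ∈ Y := ⟨(x : ↥N), hx, rfl⟩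
        have : (⟨((x : ↥N) : M), Submonoid.mem_map.mpr ⟨(x : ↥N), x.2, rfl⟩⟩ :
            ↥(P.map N.subtype)) ∈ ρ' '' L := hLeq ▸ hx'
        obtain ⟨w, hw, hwe⟩ := this
        refine ⟨w, hw, ?_⟩
        have := congrArg Subtype.val hwe
        rw [hval] at this
        exact Subtype.val_injective (Subtype.val_injective this)
    · rintro ⟨L, hL, hLeq⟩
      refine ⟨L, hL, ?_⟩
      ext y
      constructor
      · rintro ⟨w, hw, rfl⟩
        have : ρ w ∈ Subtype.val ⁻¹' X := hLeq ▸ ⟨w, hw, rfl⟩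
        simp only [Set.mem_preimage, hval]
        exact ⟨(ρ w : ↥N), this, rfl⟩
      · intro hy
        obtain ⟨z, hz, hze⟩ := (Set.mem_preimage.mp hy : (y : M) ∈ Y)
        have hzP : z ∈ P := hX hz
        have hmem : (⟨z, hzP⟩ : ↥P) ∈ ρ '' L := by
          rw [hLeq]; exact hz
        obtain ⟨w, hwL, hwρ⟩ := hmem
        refine ⟨w, hwL, ?_⟩
        ext
        rw [hval, hwρ]
        exact hze





private lemma keyGroup {M : Type} [Group M]
    (hMfg : ∃ (n : ℕ) (π : List (Fin n) → M), FreeHomOnto M π)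
    (N : Subgroup M) :
    (GroupCForallFlat C M → GroupCForallFlat C ↥N) ∧
    (GroupCExistsFlat C M → GroupCExistsFlat C ↥N) := by
  obtain ⟨m, πM, hπM⟩ := hMfg
  have main : ∀ (P : Subgroup ↥N) (k : ℕ) (ρ : List (Fin k) → ↥P),
      FreeHomOnto (↥P) ρ →
      ∃ (ρ' : List (Fin k) → ↥(P.map N.subtype)),
        FreeHomOnto (↥(P.map N.subtype)) ρ' ∧
        ∀ w, (ρ' w : M) = ((ρ w : ↥N) : M) := by
    intro P k ρ hρ
    refine ⟨fun w => ⟨((ρ w : ↥N) : M), Subgroup.mem_map.mpr ⟨(ρ w : ↥N), (ρ w).2, rfl⟩⟩,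
      ⟨?_, ?_, ?_⟩, fun w => rfl⟩
    · ext; simp [hρ.map_nil]
    · intro u v; ext; simp [hρ.map_append]
    · rintro ⟨y, hy⟩
      obtain ⟨x, hxP, hx⟩ := Subgroup.mem_map.mp hy
      obtain ⟨w, hw⟩ := hρ.surjective ⟨x, hxP⟩
      exact ⟨w, by ext; simp [hw]; exact hx⟩
  constructor
  · intro hflat P n k π ρ hπ hρ X hX
    obtain ⟨ρ', hρ', hval⟩ := main P k ρ hρ
    set Y : Set M := Subtype.val '' X with hY
    have hYN : Y ⊆ (N : Set M) := by rintro _ ⟨x, _, rfl⟩; exact x.2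
    have hYP : Y ⊆ ((P.map N.subtype : Subgroup M) : Set M) := by
      rintro _ ⟨x, hx, rfl⟩; exact Subgroup.mem_map.mpr ⟨x, hX hx, rfl⟩
    have h1 := hflat N m n πM π hπM hπ Y hYN
    have h2 := hflat (P.map N.subtype) m k πM ρ' hπM hρ' Y hYP
    have hXeq : (Subtype.val ⁻¹' Y : Set ↥N) = X :=
      Set.preimage_image_eq X Subtype.val_injective
    rw [hXeq] at h1
    refine (h1.symm.trans h2).trans ?_
    unfold CForall
    have hset : {w : List (Fin k) | ρ' w ∈ Subtype.val ⁻¹' Y} =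
        {w : List (Fin k) | ρ w ∈ Subtype.val ⁻¹' X} := by
      ext w
      simp only [Set.mem_setOf_eq, Set.mem_preimage, hval, hY]
      constructor
      · rintro ⟨x, hx, hxe⟩
        have : x = ((ρ w : ↥P) : ↥N) := Subtype.val_injective hxe
        rwa [← this]
      · intro h; exact ⟨((ρ w : ↥P) : ↥N), h, rfl⟩
    rw [hset]
  · intro hflat P n k π ρ hπ hρ X hX
    obtain ⟨ρ', hρ', hval⟩ := main P k ρ hρ
    set Y : Set M := Subtype.val '' X with hY
    have hYN : Y ⊆ (N : Set M) := by rintro _ ⟨x, _, rfl⟩; exact x.2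
    have hYP : Y ⊆ ((P.map N.subtype : Subgroup M) : Set M) := by
      rintro _ ⟨x, hx, rfl⟩; exact Subgroup.mem_map.mpr ⟨x, hX hx, rfl⟩
    have h1 := hflat N m n πM π hπM hπ Y hYN
    have h2 := hflat (P.map N.subtype) m k πM ρ' hπM hρ' Y hYP
    have hXeq : (Subtype.val ⁻¹' Y : Set ↥N) = X :=
      Set.preimage_image_eq X Subtype.val_injective
    rw [hXeq] at h1
    refine (h1.symm.trans h2).trans ?_
    unfold CExists
    constructor
    · rintro ⟨L, hL, hLeq⟩
      refine ⟨L, hL, ?_⟩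
      ext x
      constructor
      · rintro ⟨w, hw, rfl⟩
        have : ρ' w ∈ Subtype.val ⁻¹' Y := hLeq ▸ ⟨w, hw, rfl⟩
        simp only [Set.mem_preimage, hval] at this
        obtain ⟨z, hz, hze⟩ := this
        have : z = (ρ w : ↥N) := Subtype.val_injective hze
        simpa [Set.mem_preimage, ← this]
      · intro hx
        have hx' : ((x : ↥N) : M) ∈ Y := ⟨(x : ↥N), hx, rfl⟩
        have : (⟨((x : ↥N) : M), Subgroup.mem_map.mpr ⟨(x : ↥N), x.2, rfl⟩⟩ :
            ↥(P.map N.subtype)) ∈ ρ' '' L := hLeq ▸ hx'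
        obtain ⟨w, hw, hwe⟩ := this
        refine ⟨w, hw, ?_⟩
        have := congrArg Subtype.val hwe
        rw [hval] at this
        exact Subtype.val_injective (Subtype.val_injective this)
    · rintro ⟨L, hL, hLeq⟩
      refine ⟨L, hL, ?_⟩
      ext y
      constructor
      · rintro ⟨w, hw, rfl⟩
        have : ρ w ∈ Subtype.val ⁻¹' X := hLeq ▸ ⟨w, hw, rfl⟩
        simp only [Set.mem_preimage, hval]
        exact ⟨(ρ w : ↥N), this, rfl⟩
      · intro hy
        obtain ⟨z, hz, hze⟩ := (Set.mem_preimage.mp hy : (y : M) ∈ Y)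
        have hzP : z ∈ P := hX hz
        have hmem : (⟨z, hzP⟩ : ↥P) ∈ ρ '' L := by
          rw [hLeq]; exact hz
        obtain ⟨w, hwL, hwρ⟩ := hmem
        refine ⟨w, hwL, ?_⟩
        ext
        rw [hval, hwρ]
        exact hze



end Stmt13Aux


/-- Let `C` be closed under inverse homomorphism.
(1) If a finitely generated monoid `M` is `C^•`-flat as a monoid (`• ∈ {∀, ∃}`) and
`N ≤ M` is a finitely generated submonoid, then `N` is `C^•`-flat as a monoid.
(2) If a finitely generated group `G` is `C^•`-flat as a group and `H ≤ G` is a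
finitely generated subgroup, then `H` is `C^•`-flat as a group. -/
theorem stmt13 (C : LangClass) (hC : ClosedUnderInvHom C)
    {M : Type} [Monoid M]
    (hMfg : ∃ (n : ℕ) (π : List (Fin n) → M), FreeHomOnto M π)
    (N : Submonoid M)
    (hNfg : ∃ (k : ℕ) (ρ : List (Fin k) → ↥N), FreeHomOnto (↥N) ρ)
    {G : Type} [Group G]
    (hGfg : ∃ (n : ℕ) (π : List (Fin n) → G), FreeHomOnto G π)
    (H : Subgroup G)
    (hHfg : ∃ (k : ℕ) (ρ : List (Fin k) → ↥H), FreeHomOnto (↥H) ρ) :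
    (MonoidCForallFlat C M → MonoidCForallFlat C ↥N) ∧
    (MonoidCExistsFlat C M → MonoidCExistsFlat C ↥N) ∧
    (GroupCForallFlat C G → GroupCForallFlat C ↥H) ∧
    (GroupCExistsFlat C G → GroupCExistsFlat C ↥H) :=
  ⟨(keyMonoid C hMfg N).1, (keyMonoid C hMfg N).2,
   (keyGroup C hGfg H).1, (keyGroup C hGfg H).2⟩
end

section
/- Let 𝐂 be a full semi-AFL. Let M be a finitely generated monoid and let N ≤ M be a submonoid such that M \ N is an ideal of M and M \ N is finite. Then M is 𝐂^∃-flat (as a monoid) if and only if N is 𝐂^∃-flat (as a monoid). -/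
/-!
Because `M \ N` is an ideal, a product lies in `N` only if each factor does. Hence a word over the
generators of `M` represents an element of `N` only if all its letters do, and erasing the other
letters turns a presentation of `M` into one of `N`; the same works for `T ∩ N` inside a finitely
generated `T ≤ M`. Intersecting with the regular language of words over the letters in `N`, or
erasing the remaining letters by a homomorphism, moves `C^∃`-subsets of `N` between the two
presentations. A subset `X ⊆ T` is `X ∩ N` plus a finite set, and finite sets are `C^∃`-subsets,
so flatness of `N`, applied to `T ∩ N ≤ N`, gives flatness of `M`. Conversely, for `T ≤ N` both
`C^∃(N | T)` and `C^∃(T)` equal `C^∃(M | T)` when `M` is flat.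
-/

open Set

section Regular

variable {n : ℕ}

theorem isRegularLang_of_isRegular {L : Set (List (Fin n))}
    (h : Language.IsRegular (L : Language (Fin n))) : IsRegularLang L := by
  obtain ⟨σ, _, A, hA⟩ := h
  exact ⟨σ, inferInstance, A, fun w => by rw [hA]; rfl⟩

theorem isRegularLang_forall_mem (G : Fin n → Prop) :
    IsRegularLang {w : List (Fin n) | ∀ a ∈ w, G a} := by
  refine isRegularLang_of_isRegular (.of_finite_range_leftQuotient
    (((finite_singleton (0 : Language (Fin n))).insert {w | ∀ a ∈ w, G a}).subset ?_))
  rintro _ ⟨x, rfl⟩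
  by_cases hx : ∀ a ∈ x, G a
  · left
    ext y
    change (∀ a ∈ x ++ y, G a) ↔ _
    simp only [List.forall_mem_append]
    exact and_iff_right hx
  · right
    ext y
    change (∀ a ∈ x ++ y, G a) ↔ False
    simp only [List.forall_mem_append, iff_false, not_and]
    exact fun h => absurd h hx

theorem isRegularLang_singleton (w : List (Fin n)) : IsRegularLang ({w} : Set (List (Fin n))) := by
  have hfin := (finite_range fun i : Fin (w.length + 1) => ({w.drop i} : Language (Fin n))).insert 0
  refine isRegularLang_of_isRegular (.of_finite_range_leftQuotient (hfin.subset ?_))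
  rintro _ ⟨x, rfl⟩
  by_cases hx : x <+: w
  · obtain ⟨y, rfl⟩ := hx
    right
    refine ⟨⟨x.length, by simp⟩, ?_⟩
    ext z
    change z = (x ++ y).drop x.length ↔ x ++ z = x ++ y
    simp
  · left
    ext z
    change x ++ z = w ↔ z ∈ (0 : Language (Fin n))
    exact iff_of_false (fun h => hx ⟨z, h⟩) (Language.notMem_zero z)

end Regular

section Closure

variable {C : LangClass} {n : ℕ} {P Q : Type} [Monoid P] [Monoid Q]

/-- Pull `L ∋ u` back to the one-letter alphabet along `0 ↦ u`, cut out the word `[0]`, and push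
it forward along `0 ↦ w`. -/
theorem singleton_mem_of_nonempty (hC : IsCone C) {m : ℕ} {L : Set (List (Fin m))}
    (hL : L ∈ C m) (hne : L.Nonempty) (w : List (Fin n)) : ({w} : Set (List (Fin n))) ∈ C n := by
  obtain ⟨hH, hI, hR⟩ := hC
  obtain ⟨u, hu⟩ := hne
  have hcut : {v : List (Fin 1) | v.flatMap (fun _ => u) ∈ L} ∩ {[0]} = {[0]} :=
    inter_eq_right.mpr (singleton_subset_iff.mpr (by simpa using hu))
  have h := hH 1 n (fun _ => w) _ (hcut ▸ hR 1 _ (hI 1 m _ L hL) _ (isRegularLang_singleton [0]))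
  simpa using h

theorem empty_mem_of_empty_mem (hH : ClosedUnderHom C) {m : ℕ}
    (h : (∅ : Set (List (Fin m))) ∈ C m) (n : ℕ) : (∅ : Set (List (Fin n))) ∈ C n := by
  simpa using hH m n (fun _ => []) ∅ h

theorem CExists.union (hU : ClosedUnderUnion C) {φ : List (Fin n) → P} {X Y : Set P}
    (hX : CExists C φ X) (hY : CExists C φ Y) : CExists C φ (X ∪ Y) := by
  obtain ⟨L₁, h₁, rfl⟩ := hX
  obtain ⟨L₂, h₂, rfl⟩ := hY
  exact ⟨L₁ ∪ L₂, hU n L₁ h₁ L₂ h₂, image_union φ L₁ L₂⟩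

theorem CExists.union_finite (hC : IsFullSemiAFL C) (hne : ∃ m, ∃ L ∈ C m, L.Nonempty)
    {φ : List (Fin n) → P} (hφ : Function.Surjective φ) {X F : Set P}
    (hX : CExists C φ X) (hF : F.Finite) : CExists C φ (X ∪ F) := by
  obtain ⟨m, L, hL, hLne⟩ := hne
  induction F, hF using Set.Finite.induction_on with
  | empty => simpa using hX
  | @insert x F _ _ ih =>
    obtain ⟨w, rfl⟩ := hφ x
    rw [insert_eq, union_comm {φ w}, ← union_assoc]
    exact ih.union hC.2 ⟨{w}, singleton_mem_of_nonempty hC.1 hL hLne w, image_singleton⟩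

theorem FreeHomOnto.mulEquiv_comp {φ : List (Fin n) → P} (hφ : FreeHomOnto P φ) (e : P ≃* Q) :
    FreeHomOnto Q (fun w => e (φ w)) :=
  ⟨by simp [hφ.map_nil], fun u v => by simp [hφ.map_append], e.surjective.comp hφ.surjective⟩

theorem cExists_mulEquiv_comp_iff (φ : List (Fin n) → P) (e : P ≃* Q) (Z : Set Q) :
    CExists C (fun w => e (φ w)) Z ↔ CExists C φ (e ⁻¹' Z) := by
  refine exists_congr fun L => and_congr_right fun _ => ?_
  rw [← image_image]
  exact (eq_preimage_iff_image_eq e.bijective).symm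

end Closure

section Degenerate

variable {C : LangClass}

theorem cExists_iff_of_forall_eq_empty (h0 : ∀ m, ∀ L ∈ C m, L = ∅) {n : ℕ} {P : Type} [Monoid P]
    (φ : List (Fin n) → P) (X : Set P) : CExists C φ X ↔ X = ∅ ∧ ∅ ∈ C n := by
  constructor
  · rintro ⟨L, hL, rfl⟩
    obtain rfl := h0 n L hL
    exact ⟨image_empty φ, hL⟩
  · rintro ⟨rfl, h⟩
    exact ⟨∅, h, image_empty φ⟩

theorem monoidCExistsFlat_of_forall_eq_empty (hH : ClosedUnderHom C) (h0 : ∀ m, ∀ L ∈ C m, L = ∅)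
    (M : Type) [Monoid M] : MonoidCExistsFlat C M := by
  intro T n k π ρ _ _ X hXT
  rw [cExists_iff_of_forall_eq_empty h0, cExists_iff_of_forall_eq_empty h0,
    Subtype.preimage_coe_eq_empty, inter_eq_right.mpr hXT]
  exact and_congr_right fun _ => ⟨fun h => empty_mem_of_empty_mem hH h k,
    fun h => empty_mem_of_empty_mem hH h n⟩

end Degenerate

section Corestrict

variable {C : LangClass} {n : ℕ} {P Q : Type} [Monoid P] [Monoid Q] {φ : List (Fin n) → P}

theorem FreeHomOnto.map_cons_s14 (hφ : FreeHomOnto P φ) (a : Fin n) (w : List (Fin n)) :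
    φ (a :: w) = φ [a] * φ w :=
  hφ.map_append [a] w

theorem FreeHomOnto.forall_mem_of_mem (hφ : FreeHomOnto P φ) {S : Set P}
    (hS : ∀ x y, x * y ∈ S → x ∈ S ∧ y ∈ S) {w : List (Fin n)} (hw : φ w ∈ S) :
    ∀ a ∈ w, φ [a] ∈ S := by
  induction w with
  | nil => simp
  | cons a w ih =>
    rw [hφ.map_cons_s14] at hw
    exact List.forall_mem_cons.mpr ⟨(hS _ _ hw).1, ih (hS _ _ hw).2⟩

variable (φ) in
open Classical in
noncomputable def corestrict (j : Q →* P) (w : List (Fin n)) : Q :=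
  (w.map fun a => if h : φ [a] ∈ range j then h.choose else 1).prod

variable {j : Q →* P}

theorem corestrict_append (u v : List (Fin n)) :
    corestrict φ j (u ++ v) = corestrict φ j u * corestrict φ j v := by
  simp [corestrict]

theorem corestrict_singleton_of_notMem {a : Fin n} (ha : φ [a] ∉ range j) :
    corestrict φ j [a] = 1 := by
  simp [corestrict, ha]

theorem apply_corestrict_singleton {a : Fin n} (ha : φ [a] ∈ range j) :
    j (corestrict φ j [a]) = φ [a] := by
  simp [corestrict, ha, ha.choose_spec]

theorem apply_corestrict (hφ : FreeHomOnto P φ) {w : List (Fin n)}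
    (hw : ∀ a ∈ w, φ [a] ∈ range j) : j (corestrict φ j w) = φ w := by
  induction w with
  | nil => simp [corestrict, hφ.map_nil]
  | cons a w ih =>
    rw [List.forall_mem_cons] at hw
    rw [← List.singleton_append, corestrict_append, map_mul, apply_corestrict_singleton hw.1,
      ih hw.2, ← hφ.map_append]

theorem freeHomOnto_corestrict (hφ : FreeHomOnto P φ)
    (hS : ∀ x y, x * y ∈ range j → x ∈ range j ∧ y ∈ range j) (hj : Function.Injective j) :
    FreeHomOnto Q (corestrict φ j) := by
  refine ⟨by simp [corestrict], corestrict_append, fun q => ?_⟩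
  obtain ⟨w, hw⟩ := hφ.surjective (j q)
  refine ⟨w, hj ?_⟩
  rw [apply_corestrict hφ (hφ.forall_mem_of_mem hS (hw ▸ mem_range_self q)), hw]

theorem CExists.preimage_corestrict (hR : ClosedUnderInterReg C) (hφ : FreeHomOnto P φ)
    (hS : ∀ x y, x * y ∈ range j → x ∈ range j ∧ y ∈ range j) (hj : Function.Injective j)
    {X : Set P} (hX : CExists C φ X) : CExists C (corestrict φ j) (j ⁻¹' X) := by
  obtain ⟨L, hL, rfl⟩ := hX
  refine ⟨L ∩ {w | ∀ a ∈ w, φ [a] ∈ range j}, hR n L hL _ (isRegularLang_forall_mem _), ?_⟩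
  ext q
  constructor
  · rintro ⟨w, ⟨hwL, hw⟩, rfl⟩
    exact ⟨w, hwL, (apply_corestrict hφ hw).symm⟩
  · rintro ⟨w, hwL, hwq⟩
    have hw := hφ.forall_mem_of_mem hS ⟨q, hwq.symm⟩
    exact ⟨w, ⟨hwL, hw⟩, hj (by rw [apply_corestrict hφ hw, hwq])⟩

/-- The witness is the image of the given language under the homomorphism erasing every letter
outside `range j`. -/
theorem CExists.of_corestrict (hH : ClosedUnderHom C) (hφ : FreeHomOnto P φ) {Y : Set Q}
    (hY : CExists C (corestrict φ j) Y) : CExists C φ (j '' Y) := by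
  classical
  obtain ⟨L, hL, rfl⟩ := hY
  let erase : Fin n → List (Fin n) := fun a => if φ [a] ∈ range j then [a] else []
  have herase_mem : ∀ w : List (Fin n), ∀ a ∈ w.flatMap erase, φ [a] ∈ range j := by
    intro w a ha
    obtain ⟨b, -, hb⟩ := List.mem_flatMap.mp ha
    by_cases hb' : φ [b] ∈ range j <;> simp_all [erase]
  have herase : ∀ w : List (Fin n), corestrict φ j (w.flatMap erase) = corestrict φ j w := by
    intro w
    induction w with
    | nil => rfl
    | cons a w ih =>
      rw [List.flatMap_cons, corestrict_append, ih, ← List.singleton_append, corestrict_append]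
      by_cases ha : φ [a] ∈ range j
      · rw [show erase a = [a] from if_pos ha]
      · rw [show erase a = [] from if_neg ha, corestrict_singleton_of_notMem ha]
        rfl
  refine ⟨_, hH n n erase L hL, ?_⟩
  rw [image_image, image_image]
  exact image_congr fun w _ => by rw [← apply_corestrict hφ (herase_mem w), herase]

theorem cExists_iff_cExists_corestrict (hC : IsFullSemiAFL C) (hne : ∃ m, ∃ L ∈ C m, L.Nonempty)
    (hφ : FreeHomOnto P φ) (hS : ∀ x y, x * y ∈ range j → x ∈ range j ∧ y ∈ range j)
    (hj : Function.Injective j) {X : Set P} (hX : (X \ range j).Finite) :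
    CExists C φ X ↔ CExists C (corestrict φ j) (j ⁻¹' X) := by
  refine ⟨CExists.preimage_corestrict hC.1.2.2 hφ hS hj, fun h => ?_⟩
  simpa [image_preimage_eq_inter_range, inter_union_sdiff] using
    (CExists.of_corestrict hC.1.1 hφ h).union_finite hC hne hφ.surjective hX

end Corestrict

section Flat

variable {C : LangClass} {M : Type} [Monoid M]

theorem MonoidCExistsFlat.submonoid (hM : MonoidCExistsFlat C M)
    (hMfg : ∃ (n : ℕ) (π : List (Fin n) → M), FreeHomOnto M π) (N : Submonoid M) :
    MonoidCExistsFlat C N := by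
  intro T n k π ρ hπ hρ Y hYT
  obtain ⟨n₀, π₀, hπ₀⟩ := hMfg
  let e : T ≃* T.map N.subtype := T.equivMapOfInjective N.subtype Subtype.val_injective
  have hYN : Subtype.val '' Y ⊆ (N : Set M) := by
    rintro _ ⟨y, -, rfl⟩
    exact y.2
  have hYT' : Subtype.val '' Y ⊆ (T.map N.subtype : Set M) := by
    rintro _ ⟨y, hy, rfl⟩
    exact ⟨y, hYT hy, rfl⟩
  have hpre : e ⁻¹' (Subtype.val ⁻¹' (Subtype.val '' Y)) = Subtype.val ⁻¹' Y := by
    ext t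
    change ((t : N) : M) ∈ Subtype.val '' Y ↔ (t : N) ∈ Y
    exact Subtype.val_injective.mem_set_image
  calc CExists C π Y
      ↔ CExists C π (Subtype.val ⁻¹' (Subtype.val '' Y)) := by
        rw [preimage_image_eq Y Subtype.val_injective]
    _ ↔ CExists C π₀ (Subtype.val '' Y) := (hM N n₀ n π₀ π hπ₀ hπ _ hYN).symm
    _ ↔ CExists C (fun w => e (ρ w)) (Subtype.val ⁻¹' (Subtype.val '' Y)) :=
        hM _ n₀ k π₀ _ hπ₀ (hρ.mulEquiv_comp e) _ hYT'
    _ ↔ CExists C ρ (Subtype.val ⁻¹' Y) := by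
        rw [cExists_mulEquiv_comp_iff, hpre]

theorem mem_and_mem_of_mul_mem {N : Submonoid M}
    (hIdeal : ∀ a b : M, ∀ x ∈ ((N : Set M))ᶜ, a * x * b ∈ ((N : Set M))ᶜ) {x y : M}
    (h : x * y ∈ N) : x ∈ N ∧ y ∈ N := by
  refine ⟨by_contra fun hx => ?_, by_contra fun hy => ?_⟩
  · exact hIdeal 1 y x hx (by simpa using h)
  · exact hIdeal x 1 y hy (by simpa using h)

theorem MonoidCExistsFlat.of_submonoid (hC : IsFullSemiAFL C) (N : Submonoid M)
    (hIdeal : ∀ a b : M, ∀ x ∈ ((N : Set M))ᶜ, a * x * b ∈ ((N : Set M))ᶜ)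
    (hFin : (((N : Set M))ᶜ).Finite) (hN : MonoidCExistsFlat C N) :
    MonoidCExistsFlat C M := by
  by_cases hne : ∃ m, ∃ L ∈ C m, L.Nonempty
  swap
  · simp only [not_exists, not_and, not_nonempty_iff_eq_empty] at hne
    exact monoidCExistsFlat_of_forall_eq_empty hC.1.1 hne M
  intro T n k π ρ hπ hρ X hXT
  let N' : Submonoid N := T.comap N.subtype
  let j : N' →* T := (N.subtype.comp N'.subtype).codRestrict T fun x => x.2
  have hj : Function.Injective j := fun x y h => Subtype.ext (Subtype.ext congr(($h : M)))
  have hrangeN : range N.subtype = N := by simp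
  have hrange : range j = {t : T | (t : M) ∈ N} := by
    ext t
    exact ⟨by rintro ⟨x, rfl⟩; exact x.1.2, fun ht => ⟨⟨⟨t, ht⟩, t.2⟩, rfl⟩⟩
  have hSN : ∀ x y, x * y ∈ range N.subtype → x ∈ range N.subtype ∧ y ∈ range N.subtype := by
    rw [hrangeN]
    exact fun x y => mem_and_mem_of_mul_mem hIdeal
  have hST : ∀ x y, x * y ∈ range j → x ∈ range j ∧ y ∈ range j := by
    rw [hrange]
    exact fun x y => mem_and_mem_of_mul_mem hIdeal
  have hfinM : (X \ range N.subtype).Finite := by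
    rw [hrangeN]
    exact hFin.subset (sdiff_subset_compl X N)
  have hfinT : (Subtype.val ⁻¹' X \ range j).Finite := by
    rw [hrange]
    exact (hFin.preimage Subtype.val_injective.injOn).subset fun t ht => ht.2
  have hflat := hN N' n k _ _ (freeHomOnto_corestrict hπ hSN Subtype.val_injective)
    (freeHomOnto_corestrict hρ hST hj) (Subtype.val ⁻¹' X) fun x hx => hXT hx
  exact (cExists_iff_cExists_corestrict hC hne hπ hSN Subtype.val_injective hfinM).trans
    (hflat.trans (cExists_iff_cExists_corestrict hC hne hρ hST hj hfinT).symm)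

end Flat

/-- Let `C` be a full semi-AFL, `M` a finitely generated monoid and
`N ≤ M` a submonoid such that `M \ N` is a finite ideal of `M`.  Then `M` is
`C^∃`-flat as a monoid iff `N` is `C^∃`-flat as a monoid. -/
theorem stmt14 (C : LangClass) (hC : IsFullSemiAFL C)
    {M : Type} [Monoid M]
    (hMfg : ∃ (n : ℕ) (π : List (Fin n) → M), FreeHomOnto M π)
    (N : Submonoid M)
    (hIdeal : ∀ a b : M, ∀ x ∈ ((N : Set M))ᶜ, a * x * b ∈ ((N : Set M))ᶜ)
    (hFin : (((N : Set M))ᶜ).Finite) :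
    MonoidCExistsFlat C M ↔ MonoidCExistsFlat C ↥N :=
  ⟨fun hM => hM.submonoid hMfg N, MonoidCExistsFlat.of_submonoid hC N hIdeal hFin⟩
end
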